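/- arXiv:1210.4417 — 7 statements merged into one kernel-verified Lean document; each statement's English description precedes it below -/
import Mathlib

section
/- Let X be a non-negative random variable on a probability space with X ∈ L². Then for all 0 < s < 1, one has Var(X^s)^{1/s} ≤ Var(X). -/
open MeasureTheory ProbabilityTheory

/-- Real version of subadditivity of `rpow` for exponents in `[0,1]`. -/
lemma aux_rpow_add_le {a b s : ℝ} (ha : 0 ≤ a) (hb : 0 ≤ b) (hs0 : 0 ≤ s) (hs1 : s ≤ 1) :
    (a + b) ^ s ≤ a ^ s + b ^ s := by
  have h := NNReal.rpow_add_le_add_rpow a.toNNReal b.toNNReal hs0 hs1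
  have h' : (((a.toNNReal + b.toNNReal) ^ s : NNReal) : ℝ) ≤
      ((a.toNNReal ^ s + b.toNNReal ^ s : NNReal) : ℝ) := by exact_mod_cast h
  simpa [NNReal.coe_rpow, Real.coe_toNNReal a ha, Real.coe_toNNReal b hb] using h'

/-- `|x^s - y^s| ≤ |x - y|^s` for nonnegative reals and `0 ≤ s ≤ 1`. -/
lemma aux_abs_rpow_sub_rpow_le {x y s : ℝ} (hx : 0 ≤ x) (hy : 0 ≤ y)
    (hs0 : 0 ≤ s) (hs1 : s ≤ 1) : |x ^ s - y ^ s| ≤ |x - y| ^ s := by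
  have key : ∀ u v : ℝ, 0 ≤ v → v ≤ u → u ^ s - v ^ s ≤ (u - v) ^ s := by
    intro u v hv huv
    have h1 : u ^ s ≤ (u - v) ^ s + v ^ s := by
      have := aux_rpow_add_le (a := u - v) (b := v) (by linarith) hv hs0 hs1
      simpa [sub_add_cancel] using this
    linarith
  rcases le_total y x with h | h
  · rw [abs_of_nonneg (by linarith : (0:ℝ) ≤ x - y),
      abs_of_nonneg (sub_nonneg.2 (Real.rpow_le_rpow hy h hs0))]
    exact key x y hy h
  · rw [abs_of_nonpos (by linarith : x - y ≤ 0),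
      abs_of_nonpos (sub_nonpos.2 (Real.rpow_le_rpow hx h hs0))]
    have := key y x hx h
    simpa [neg_sub] using this

/-- `x^s ≤ 1 + x` for `x ≥ 0`, `0 ≤ s ≤ 1`. -/
lemma aux_rpow_le_one_add {x s : ℝ} (hx : 0 ≤ x) (hs0 : 0 ≤ s) (hs1 : s ≤ 1) :
    x ^ s ≤ 1 + x := by
  rcases le_total x 1 with h | h
  · have := Real.rpow_le_one hx h hs0
    linarith
  · have := Real.rpow_le_rpow_of_exponent_le h hs1
    rw [Real.rpow_one] at this
    linarith

/-- Variance is at most the second moment about any point. -/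
lemma aux_variance_le {Ω : Type*} {mΩ : MeasurableSpace Ω} {μ : Measure Ω}
    [IsProbabilityMeasure μ] {Y : Ω → ℝ} (hY : MemLp Y 2 μ) (c : ℝ) :
    variance Y μ ≤ ∫ ω, (Y ω - c) ^ 2 ∂μ := by
  have hY1 : Integrable Y μ := hY.integrable one_le_two
  have hY2 : Integrable (fun ω => Y ω ^ 2) μ := hY.integrable_sq
  have hmul : Integrable (fun ω => 2 * c * Y ω) μ := hY1.const_mul (2 * c)
  have hexp : ∫ ω, (Y ω - c) ^ 2 ∂μ
      = ∫ ω, Y ω ^ 2 ∂μ - 2 * c * ∫ ω, Y ω ∂μ + c ^ 2 := by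
    have : (fun ω => (Y ω - c) ^ 2) = fun ω => (Y ω ^ 2 - 2 * c * Y ω) + c ^ 2 := by
      funext ω; ring
    have h12 : Integrable (fun ω => Y ω ^ 2 - 2 * c * Y ω) μ := hY2.sub hmul
    rw [this, integral_add h12 (integrable_const _),
      integral_sub hY2 hmul, integral_const_mul, integral_const]
    simp
  rw [variance_eq_sub hY, hexp]
  have h := sq_nonneg ((∫ ω, Y ω ∂μ) - c)
  have : μ[Y ^ 2] = ∫ ω, Y ω ^ 2 ∂μ := by rfl
  rw [this]
  nlinarith [sq_nonneg ((∫ ω, Y ω ∂μ) - c)]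

/-- For a non-negative random variable `X ∈ L²` on a probability space and `0 < s < 1`,
`Var(X^s)^{1/s} ≤ Var(X)`. -/
theorem variance_rpow_le_variance
    {Ω : Type*} {mΩ : MeasurableSpace Ω} {μ : Measure Ω} [IsProbabilityMeasure μ]
    {X : Ω → ℝ} (hX : MemLp X 2 μ) (hX0 : 0 ≤ᵐ[μ] X)
    {s : ℝ} (hs0 : 0 < s) (hs1 : s < 1) :
    (variance (fun ω => X ω ^ s) μ) ^ (1 / s) ≤ variance X μ := by
  set m : ℝ := ∫ ω, X ω ∂μ with hm
  have hm0 : 0 ≤ m := integral_nonneg_of_ae hX0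
  -- measurability of X^s
  have hXs_meas : AEStronglyMeasurable (fun ω => X ω ^ s) μ :=
    (Real.continuous_rpow_const hs0.le).comp_aestronglyMeasurable hX.1
  -- MemLp of X^s via the bound X^s ≤ 1 + X
  have h1X : MemLp (fun ω => 1 + X ω) 2 μ := (memLp_const (1:ℝ)).add hX
  have hXs : MemLp (fun ω => X ω ^ s) 2 μ := by
    refine h1X.of_le hXs_meas ?_
    filter_upwards [hX0] with ω hω
    simp only [Pi.zero_apply] at hω
    rw [Real.norm_eq_abs, Real.norm_eq_abs,
      abs_of_nonneg (Real.rpow_nonneg hω s), abs_of_nonneg (by linarith : (0:ℝ) ≤ 1 + X ω)]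
    exact aux_rpow_le_one_add hω hs0.le hs1.le
  -- W = (X - m)^2
  set W : Ω → ℝ := fun ω => (X ω - m) ^ 2 with hW
  have hXm : MemLp (fun ω => X ω - m) 2 μ := hX.sub (memLp_const m)
  have hWint : Integrable W μ := hXm.integrable_sq
  have hW0 : ∀ ω, 0 ≤ W ω := fun ω => sq_nonneg _
  -- measurability and integrability of W^s
  have hWs_meas : AEStronglyMeasurable (fun ω => W ω ^ s) μ :=
    (Real.continuous_rpow_const hs0.le).comp_aestronglyMeasurable hWint.1
  have hWs_int : Integrable (fun ω => W ω ^ s) μ := by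
    refine Integrable.mono ((integrable_const 1).add hWint) hWs_meas ?_
    filter_upwards with ω
    simp only [Real.norm_eq_abs, Pi.add_apply]
    rw [abs_of_nonneg (Real.rpow_nonneg (hW0 ω) s),
      abs_of_nonneg (by have := hW0 ω; linarith : (0:ℝ) ≤ (1:ℝ) + W ω)]
    exact aux_rpow_le_one_add (hW0 ω) hs0.le hs1.le
  -- Step 1: Var(X^s) ≤ ∫ (X^s - m^s)^2
  have step1 : variance (fun ω => X ω ^ s) μ ≤ ∫ ω, (X ω ^ s - m ^ s) ^ 2 ∂μ :=
    aux_variance_le hXs (m ^ s)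
  -- Step 2: pointwise bound (X^s - m^s)^2 ≤ W^s a.e.
  have step2 : ∫ ω, (X ω ^ s - m ^ s) ^ 2 ∂μ ≤ ∫ ω, W ω ^ s ∂μ := by
    refine integral_mono_ae ((hXs.sub (memLp_const (m ^ s))).integrable_sq) hWs_int ?_
    filter_upwards [hX0] with ω hω
    simp only [Pi.zero_apply] at hω
    have habs : |X ω ^ s - m ^ s| ≤ |X ω - m| ^ s :=
      aux_abs_rpow_sub_rpow_le hω hm0 hs0.le hs1.le
    have h1 : (X ω ^ s - m ^ s) ^ 2 ≤ (|X ω - m| ^ s) ^ 2 := by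
      rw [← sq_abs]
      exact pow_le_pow_left₀ (abs_nonneg _) habs 2
    have h2 : (|X ω - m| ^ s) ^ (2:ℕ) = W ω ^ s := by
      have hw : W ω = |X ω - m| ^ (2:ℕ) := by simp [hW, sq_abs]
      rw [hw, ← Real.rpow_natCast (|X ω - m| ^ s) 2, ← Real.rpow_natCast |X ω - m| 2,
        ← Real.rpow_mul (abs_nonneg _), ← Real.rpow_mul (abs_nonneg _), mul_comm]
    rw [← h2]; exact h1
  -- Step 3: Jensen: ∫ W^s ≤ (∫ W)^s
  have step3 : ∫ ω, W ω ^ s ∂μ ≤ (∫ ω, W ω ∂μ) ^ s := by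
    have hconc : ConcaveOn ℝ (Set.Ici 0) fun x : ℝ => x ^ s :=
      Real.concaveOn_rpow hs0.le hs1.le
    exact hconc.le_map_integral ((Real.continuous_rpow_const hs0.le).continuousOn)
      isClosed_Ici (Filter.Eventually.of_forall fun ω => hW0 ω) hWint hWs_int
  -- ∫ W = Var X
  have hVarX : ∫ ω, W ω ∂μ = variance X μ := by
    rw [variance_eq_integral hX.aemeasurable]
  have hchain : variance (fun ω => X ω ^ s) μ ≤ (variance X μ) ^ s := by
    calc variance (fun ω => X ω ^ s) μ ≤ ∫ ω, (X ω ^ s - m ^ s) ^ 2 ∂μ := step1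
      _ ≤ ∫ ω, W ω ^ s ∂μ := step2
      _ ≤ (∫ ω, W ω ∂μ) ^ s := step3
      _ = (variance X μ) ^ s := by rw [hVarX]
  -- conclude by raising to 1/s
  have hvar0 : 0 ≤ variance (fun ω => X ω ^ s) μ := variance_nonneg _ _
  have hVX0 : 0 ≤ variance X μ := variance_nonneg _ _
  have := Real.rpow_le_rpow hvar0 hchain (by positivity : (0:ℝ) ≤ 1 / s)
  rwa [← Real.rpow_mul hVX0, mul_one_div_cancel hs0.ne', Real.rpow_one] at this
end

section
/- Let p > 0, let X be a non-negative random variable on a probability space with X ∈ L^p, and let 0 < r < s ≤ p/2. Then Var(X^r)^{1/r} ≤ Var(X^s)^{1/s}. -/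
open MeasureTheory ProbabilityTheory
open scoped ENNReal NNReal

theorem aux_rpow_sub {u v t : ℝ} (hv : 0 ≤ v) (hvu : v ≤ u) (ht : 0 ≤ t) (ht1 : t ≤ 1) :
    u ^ t - v ^ t ≤ (u - v) ^ t := by
  have h := NNReal.rpow_add_le_add_rpow (u - v).toNNReal v.toNNReal ht ht1
  have h' := (NNReal.coe_le_coe).2 h
  push_cast [NNReal.coe_rpow] at h'
  rw [Real.coe_toNNReal _ (sub_nonneg.2 hvu), Real.coe_toNNReal _ hv, sub_add_cancel] at h'
  linarith

theorem aux_abs_rpow_sub {u v t : ℝ} (hu : 0 ≤ u) (hv : 0 ≤ v) (ht : 0 ≤ t) (ht1 : t ≤ 1) :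
    |u ^ t - v ^ t| ≤ |u - v| ^ t := by
  rcases le_total v u with h | h
  · rw [abs_of_nonneg (sub_nonneg.2 (Real.rpow_le_rpow hv h ht)),
      abs_of_nonneg (sub_nonneg.2 h)]
    exact aux_rpow_sub hv h ht ht1
  · rw [abs_sub_comm, abs_of_nonneg (sub_nonneg.2 (Real.rpow_le_rpow hu h ht)),
      abs_sub_comm, abs_of_nonneg (sub_nonneg.2 h)]
    exact aux_rpow_sub hu h ht ht1

theorem aux_jensen_rpow {Ω : Type*} {mΩ : MeasurableSpace Ω} {μ : Measure Ω}
    [IsProbabilityMeasure μ] {W : Ω → ℝ} (hW : Integrable W μ) (hW0 : 0 ≤ᵐ[μ] W)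
    {t : ℝ} (ht : 0 < t) (ht1 : t ≤ 1) :
    ∫ ω, W ω ^ t ∂μ ≤ (∫ ω, W ω ∂μ) ^ t := by
  rcases eq_or_lt_of_le ht1 with rfl | ht1
  · simp
  set g : Ω → ℝ≥0∞ := fun ω => ENNReal.ofReal (W ω) with hgdef
  have hg : AEMeasurable g μ := hW.aemeasurable.ennreal_ofReal
  have hf : AEMeasurable (fun ω => g ω ^ t) μ := hg.pow_const t
  have hpq : Real.HolderConjugate (1 / t) (1 / (1 - t)) := by
    rw [Real.holderConjugate_iff]; constructor
    · rw [lt_div_iff₀ ht]; linarith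
    · rw [one_div, one_div, inv_inv, inv_inv]; ring
  have holder := ENNReal.lintegral_mul_le_Lp_mul_Lq μ hpq hf (aemeasurable_const (b := (1:ℝ≥0∞)))
  simp only [Pi.mul_apply, mul_one, ENNReal.one_rpow, lintegral_const, measure_univ,
    mul_one, one_mul] at holder
  have hsimp : ∀ ω, (g ω ^ t) ^ (1 / t) = g ω := by
    intro ω
    rw [← ENNReal.rpow_mul, mul_one_div, div_self ht.ne', ENNReal.rpow_one]
  simp only [hsimp, one_div_one_div] at holder
  have hintW : 0 ≤ ∫ ω, W ω ∂μ := integral_nonneg_of_ae hW0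
  have hlint : ∫⁻ ω, g ω ∂μ = ENNReal.ofReal (∫ ω, W ω ∂μ) :=
    (ofReal_integral_eq_lintegral_ofReal hW hW0).symm
  have hWt_meas : AEStronglyMeasurable (fun ω => W ω ^ t) μ :=
    (hW.aemeasurable.pow_const t).aestronglyMeasurable
  have hWt0 : 0 ≤ᵐ[μ] fun ω => W ω ^ t := by
    filter_upwards [hW0] with ω h using Real.rpow_nonneg h t
  have hleft : ∫ ω, W ω ^ t ∂μ = (∫⁻ ω, g ω ^ t ∂μ).toReal := by
    rw [integral_eq_lintegral_of_nonneg_ae hWt0 hWt_meas]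
    congr 1
    apply lintegral_congr_ae
    filter_upwards [hW0] with ω h
    exact (ENNReal.ofReal_rpow_of_nonneg h ht.le).symm
  rw [hleft]
  calc (∫⁻ ω, g ω ^ t ∂μ).toReal ≤ (ENNReal.ofReal ((∫ ω, W ω ∂μ) ^ t)).toReal := by
        apply ENNReal.toReal_mono ENNReal.ofReal_ne_top
        calc ∫⁻ ω, g ω ^ t ∂μ ≤ (∫⁻ ω, g ω ∂μ) ^ t := by
              convert holder using 2
          _ = ENNReal.ofReal ((∫ ω, W ω ∂μ) ^ t) := by
              rw [hlint, ← ENNReal.ofReal_rpow_of_nonneg hintW ht.le]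
    _ = (∫ ω, W ω ∂μ) ^ t := ENNReal.toReal_ofReal (Real.rpow_nonneg hintW t)

theorem aux_var_le {Ω : Type*} {mΩ : MeasurableSpace Ω} {μ : Measure Ω}
    [IsProbabilityMeasure μ] {Z : Ω → ℝ} (hZ : MemLp Z 2 μ) (c : ℝ) :
    variance Z μ ≤ ∫ ω, (Z ω - c) ^ 2 ∂μ := by
  have hZ1 : Integrable Z μ := hZ.integrable one_le_two
  have hZ2 : Integrable (fun ω => Z ω ^ 2) μ := hZ.integrable_sq
  have h1 : ∫ ω, (Z ω - c) ^ 2 ∂μ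
      = (∫ ω, Z ω ^ 2 ∂μ) - 2 * c * (∫ ω, Z ω ∂μ) + c ^ 2 := by
    have : ∀ ω, (Z ω - c) ^ 2 = Z ω ^ 2 - 2 * c * Z ω + c ^ 2 := fun ω => by ring
    simp_rw [this]
    rw [integral_add (f := fun ω => Z ω ^ 2 - 2 * c * Z ω) (g := fun _ => c ^ 2)
        (hZ2.sub (hZ1.const_mul _)) (integrable_const _),
      integral_sub hZ2 (hZ1.const_mul _), MeasureTheory.integral_const_mul, integral_const]
    simp
  rw [h1, variance_eq_sub hZ]
  have h2 : (fun ω => Z ω ^ 2) = (Z ^ 2 : Ω → ℝ) := by ext ω; simp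
  rw [← h2]
  nlinarith [sq_nonneg ((∫ ω, Z ω ∂μ) - c)]

/-- Memℒp of a power. -/
theorem aux_memLp_rpow {Ω : Type*} {mΩ : MeasurableSpace Ω} {μ : Measure Ω}
    [IsProbabilityMeasure μ] {p : ℝ} {X : Ω → ℝ} (hX : MemLp X (ENNReal.ofReal p) μ)
    (hX0 : 0 ≤ᵐ[μ] X) {q : ℝ} (hq : 0 < q) (hq2 : q ≤ p / 2) :
    MemLp (fun ω => X ω ^ q) 2 μ := by
  have hp : 0 < p := by nlinarith
  have h1 : MemLp (fun ω => ‖X ω‖ ^ q) (ENNReal.ofReal p / ENNReal.ofReal q) μ := by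
    simpa [ENNReal.toReal_ofReal hq.le] using hX.norm_rpow_div (ENNReal.ofReal q)
  have h2 : MemLp (fun ω => X ω ^ q) (ENNReal.ofReal p / ENNReal.ofReal q) μ := by
    refine MemLp.ae_eq ?_ h1
    filter_upwards [hX0] with ω h
    rw [Real.norm_eq_abs, abs_of_nonneg h]
  refine h2.mono_exponent ?_
  rw [← ENNReal.ofReal_div_of_pos hq]
  have : (2 : ℝ≥0∞) = ENNReal.ofReal 2 := by norm_num
  rw [this]
  apply ENNReal.ofReal_le_ofReal
  rw [le_div_iff₀ hq]; linarith

/-- For `p > 0`, a non-negative random variable `X ∈ L^p` on a probability space, and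
`0 < r < s ≤ p/2`, one has `Var(X^r)^{1/r} ≤ Var(X^s)^{1/s}`. -/
theorem variance_rpow_monotone_of_memLp
    {Ω : Type*} {mΩ : MeasurableSpace Ω} {μ : Measure Ω} [IsProbabilityMeasure μ]
    {p : ℝ} (hp : 0 < p)
    {X : Ω → ℝ} (hX : MemLp X (ENNReal.ofReal p) μ) (hX0 : 0 ≤ᵐ[μ] X)
    {r s : ℝ} (hr : 0 < r) (hrs : r < s) (hs : s ≤ p / 2) :
    (variance (fun ω => X ω ^ r) μ) ^ (1 / r) ≤
      (variance (fun ω => X ω ^ s) μ) ^ (1 / s) := by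
  have hs0 : 0 < s := hr.trans hrs
  set Y : Ω → ℝ := fun ω => X ω ^ s with hYdef
  set Z : Ω → ℝ := fun ω => X ω ^ r with hZdef
  set t : ℝ := r / s with htdef
  have ht : 0 < t := div_pos hr hs0
  have ht1 : t < 1 := (div_lt_one hs0).2 hrs
  have hY2 : MemLp Y 2 μ := aux_memLp_rpow hX hX0 hs0 hs
  have hZ2 : MemLp Z 2 μ := aux_memLp_rpow hX hX0 hr (le_of_lt (hrs.trans_le hs))
  set m : ℝ := ∫ ω, Y ω ∂μ with hmdef
  have hY0 : 0 ≤ᵐ[μ] Y := by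
    filter_upwards [hX0] with ω h using Real.rpow_nonneg h s
  have hm0 : 0 ≤ m := integral_nonneg_of_ae hY0
  -- integrability of (Y - m)^2 and its t-th power
  have hYm2 : Integrable (fun ω => (Y ω - m) ^ 2) μ := by
    have := (hY2.sub (memLp_const m)).integrable_sq
    simpa using this
  have hYm2_0 : 0 ≤ᵐ[μ] fun ω => (Y ω - m) ^ 2 :=
    ae_of_all μ fun ω => sq_nonneg _
  have hWt_int : Integrable (fun ω => ((Y ω - m) ^ 2) ^ t) μ := by
    refine Integrable.mono (hYm2.add (integrable_const 1)) ?_ ?_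
    · exact ((hYm2.aemeasurable).pow_const t).aestronglyMeasurable
    · refine ae_of_all μ fun ω => ?_
      have h0 : (0:ℝ) ≤ (Y ω - m) ^ 2 := sq_nonneg _
      rw [Real.norm_eq_abs, abs_of_nonneg (Real.rpow_nonneg h0 t), Real.norm_eq_abs]
      simp only [Pi.add_apply]
      rcases le_total ((Y ω - m) ^ 2) 1 with h | h
      · have : ((Y ω - m) ^ 2) ^ t ≤ 1 := Real.rpow_le_one h0 h ht.le
        have h2 : (0:ℝ) ≤ (Y ω - m) ^ 2 + 1 := by positivity
        rw [abs_of_nonneg h2]; linarith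
      · have : ((Y ω - m) ^ 2) ^ t ≤ ((Y ω - m) ^ 2) ^ (1:ℝ) :=
          Real.rpow_le_rpow_of_exponent_le h ht1.le
        rw [Real.rpow_one] at this
        have h2 : (0:ℝ) ≤ (Y ω - m) ^ 2 + 1 := by positivity
        rw [abs_of_nonneg h2]; linarith
  -- key inequality
  have key : variance Z μ ≤ (variance Y μ) ^ t := by
    have hvarY : variance Y μ = ∫ ω, (Y ω - m) ^ 2 ∂μ := by
      rw [variance_eq_integral hY2.aemeasurable]
    calc variance Z μ ≤ ∫ ω, (Z ω - m ^ t) ^ 2 ∂μ := aux_var_le hZ2 _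
      _ ≤ ∫ ω, ((Y ω - m) ^ 2) ^ t ∂μ := by
          refine integral_mono_of_nonneg (ae_of_all μ fun ω => sq_nonneg _) hWt_int ?_
          filter_upwards [hX0] with ω hXω
          have hYω : 0 ≤ Y ω := Real.rpow_nonneg hXω s
          have hst : s * t = r := by rw [htdef]; field_simp
          have hZY : Z ω = Y ω ^ t := by
            rw [hZdef, hYdef, ← Real.rpow_mul hXω, hst]
          have habs : |Y ω ^ t - m ^ t| ≤ |Y ω - m| ^ t :=
            aux_abs_rpow_sub hYω hm0 ht.le ht1.le
          calc (Z ω - m ^ t) ^ 2 = |Y ω ^ t - m ^ t| ^ 2 := by rw [hZY, sq_abs]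
            _ ≤ (|Y ω - m| ^ t) ^ 2 := by
                apply pow_le_pow_left₀ (abs_nonneg _) habs
            _ = ((Y ω - m) ^ 2) ^ t := by
                rw [← Real.rpow_natCast (|Y ω - m| ^ t) 2, ← Real.rpow_mul (abs_nonneg _),
                  ← sq_abs, ← Real.rpow_natCast |Y ω - m| 2, ← Real.rpow_mul (abs_nonneg _)]
                norm_num
                ring_nf
      _ ≤ (∫ ω, (Y ω - m) ^ 2 ∂μ) ^ t := aux_jensen_rpow hYm2 hYm2_0 ht ht1.le
      _ = (variance Y μ) ^ t := by rw [hvarY]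
  -- conclude
  have h1 : (variance Z μ) ^ (1 / r) ≤ ((variance Y μ) ^ t) ^ (1 / r) :=
    Real.rpow_le_rpow (variance_nonneg _ _) key (by positivity)
  calc (variance Z μ) ^ (1 / r) ≤ ((variance Y μ) ^ t) ^ (1 / r) := h1
    _ = (variance Y μ) ^ (1 / s) := by
        rw [← Real.rpow_mul (variance_nonneg _ _)]
        congr 1
        rw [htdef]
        field_simp
end

section
/- Let n ≥ 2, let x₁,…,xₙ ≥ 0, and let α₁,…,αₙ > 0 with ∑ᵢ αᵢ = 1. Then for every s ∈ [1,∞), ∑ᵢ αᵢ xᵢ − ∏ᵢ xᵢ^{αᵢ} ≤ (1/α_min) · Var_α(X^{s/2})^{1/s}, where α_min = minᵢ αᵢ. -/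
open Finset
open scoped NNReal

-- Bernoulli
lemma my_bern {p t : ℝ} (hp : 1 ≤ p) (ht : 0 ≤ t) : 1 - p + p * t ≤ t ^ p := by
  have := one_add_mul_self_le_rpow_one_add (s := t - 1) (by linarith) hp
  have h2 : (1 : ℝ) + (t - 1) = t := by ring
  rw [h2] at this
  linarith

-- core pair inequality, case c = p ≤ q
lemma my_pair_core {p q u v : ℝ} (hp : 0 < p) (hq : 0 < q) (hpq : p + q = 1)
    (hple : p ≤ q) (hu : 0 ≤ u) (hv : 0 ≤ v) :
    (p * v + q * u) ^ 2 ≤ (1 - p) * (p * v ^ 2 + q * u ^ 2) + p * (v ^ (2 * p) * u ^ (2 * q)) := by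
  have key : (2 * p - 1) * v ^ 2 + 2 * q * (u * v) ≤ v ^ (2 * p) * u ^ (2 * q) := by
    rcases eq_or_lt_of_le hv with hv0 | hv0
    · rw [← hv0]
      rw [Real.zero_rpow (by positivity)]
      nlinarith
    · have hγ : (1 : ℝ) ≤ 2 * q := by linarith
      have ht : 0 ≤ u / v := by positivity
      have hb := my_bern hγ ht
      have hb2 := mul_le_mul_of_nonneg_left hb (by positivity : (0:ℝ) ≤ v ^ 2)
      have hvq : (0:ℝ) < v ^ (2*q) := Real.rpow_pos_of_pos hv0 _
      have hv2 : v ^ (2*p) * v ^ (2*q) = v ^ 2 := by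
        rw [← Real.rpow_add hv0]
        have h22 : 2 * p + 2 * q = 2 := by linarith
        rw [h22, Real.rpow_two]
      have h3 : v ^ 2 * ((u/v) ^ (2*q)) = v ^ (2*p) * u ^ (2*q) := by
        rw [Real.div_rpow hu hv, ← hv2]
        field_simp
      rw [h3] at hb2
      have h4 : v ^ 2 * (1 - 2*q + 2*q*(u/v)) = (2*p-1)*v^2 + 2*q*(u*v) := by
        have hq1 : q = 1 - p := by linarith
        subst hq1
        field_simp
        ring
      rw [h4] at hb2
      exact hb2
  have expand : (p*v+q*u)^2 - (1-p)*(p*v^2+q*u^2) = p*((2*p-1)*v^2 + 2*q*(u*v)) := by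
    have hq1 : q = 1 - p := by linarith
    rw [hq1]; ring
  nlinarith [mul_le_mul_of_nonneg_left key hp.le]

-- full pair inequality with arbitrary 0 < c ≤ min p q
lemma my_pair {p q u v c : ℝ} (hp : 0 < p) (hq : 0 < q) (hpq : p + q = 1)
    (hc : 0 ≤ c) (hcp : c ≤ p) (hcq : c ≤ q) (hu : 0 ≤ u) (hv : 0 ≤ v) :
    (p * v + q * u) ^ 2 ≤ (1 - c) * (p * v ^ 2 + q * u ^ 2) + c * (v ^ (2 * p) * u ^ (2 * q)) := by
  have hgm : v ^ (2*p) * u ^ (2*q) ≤ p * v ^ 2 + q * u ^ 2 := by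
    have := Real.geom_mean_le_arith_mean2_weighted hp.le hq.le (by positivity : (0:ℝ) ≤ v^2)
      (by positivity : (0:ℝ) ≤ u^2) hpq
    calc v ^ (2*p) * u ^ (2*q) = (v^2) ^ p * (u^2) ^ q := by
          rw [Real.rpow_mul hv, Real.rpow_mul hu, Real.rpow_two, Real.rpow_two]
      _ ≤ p * v^2 + q * u^2 := this
  rcases le_total p q with hple | hqle
  · have h := my_pair_core hp hq hpq hple hu hv
    nlinarith
  · have h := my_pair_core hq hp (by linarith) hqle hv hu
    have hcomm : u ^ (2*q) * v ^ (2*p) = v ^ (2*p) * u ^ (2*q) := by ring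
    rw [hcomm] at h
    nlinarith

lemma my_pair_scaled {p₁ p₂ u v c β : ℝ} (hp₁ : 0 < p₁) (hp₂ : 0 < p₂) (hβd : β = p₁ + p₂)
    (hβ1 : β ≤ 1) (hc : 0 ≤ c) (hcp : c ≤ p₁) (hcq : c ≤ p₂) (hu : 0 ≤ u) (hv : 0 ≤ v) :
    (p₁ * v + p₂ * u) ^ 2 ≤
      (1 - c) * β * (p₁ * v ^ 2 + p₂ * u ^ 2) + c * β ^ 2 * (v ^ (p₁ / β) * u ^ (p₂ / β)) ^ 2 := by
  have hβ : 0 < β := by rw [hβd]; linarith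
  have hp : 0 < p₁ / β := by positivity
  have hq : 0 < p₂ / β := by positivity
  have hpq : p₁ / β + p₂ / β = 1 := by field_simp [hβd]; linarith
  have hcp' : c ≤ p₁ / β := le_trans hcp (by rw [le_div_iff₀ hβ]; nlinarith)
  have hcq' : c ≤ p₂ / β := le_trans hcq (by rw [le_div_iff₀ hβ]; nlinarith)
  have inst := my_pair hp hq hpq hc hcp' hcq' hu hv
  have hgsq : v ^ (2 * (p₁ / β)) * u ^ (2 * (p₂ / β)) = (v ^ (p₁ / β) * u ^ (p₂ / β)) ^ 2 := by
    rw [mul_pow, ← Real.rpow_two (v ^ (p₁ / β)), ← Real.rpow_two (u ^ (p₂ / β)),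
      ← Real.rpow_mul hv, ← Real.rpow_mul hu]
    ring_nf
  rw [hgsq] at inst
  have h2 := mul_le_mul_of_nonneg_left inst (by positivity : (0:ℝ) ≤ β ^ 2)
  have hL : β ^ 2 * ((p₁ / β) * v + (p₂ / β) * u) ^ 2 = (p₁ * v + p₂ * u) ^ 2 := by
    field_simp; try ring
  have hR : β ^ 2 * ((1 - c) * ((p₁ / β) * v ^ 2 + (p₂ / β) * u ^ 2)
        + c * (v ^ (p₁ / β) * u ^ (p₂ / β)) ^ 2)
      = (1 - c) * β * (p₁ * v ^ 2 + p₂ * u ^ 2)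
        + c * β ^ 2 * (v ^ (p₁ / β) * u ^ (p₂ / β)) ^ 2 := by
    field_simp; try ring
  rw [hL, hR] at h2
  exact h2

set_option maxHeartbeats 1000000 in
lemma my_lemA : ∀ (n : ℕ) (z α : Fin (n+1) → ℝ) (c : ℝ), 0 < c → (∀ i, c ≤ α i) →
    (∀ i, 0 ≤ z i) → (∑ i, α i = 1) → Monotone z →
    ∑ i, α i * z i ^ 2 - ∏ i, z i ^ (2 * α i) ≤
      (1/c) * (∑ i, α i * z i ^ 2 - (∑ i, α i * z i) ^ 2) := by
  intro n
  induction n with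
  | zero =>
    intro z α c hc hcα hz hsum _
    have hsum1 : α 0 = 1 := by simpa using hsum
    have e1 : ∑ i : Fin (0+1), α i * z i ^ 2 = α 0 * z 0 ^ 2 := by simp
    have e2 : ∑ i : Fin (0+1), α i * z i = α 0 * z 0 := by simp
    have e3 : ∏ i : Fin (0+1), z i ^ (2 * α i) = z 0 ^ (2 * α 0) := by simp
    rw [e1, e2, e3, hsum1]
    have h1 : z 0 ^ (2 * (1:ℝ)) = z 0 ^ 2 := by
      rw [mul_one, Real.rpow_two]
    rw [h1]
    simp
  | succ n ih =>
    intro z α c hc hcα hz hsum hmono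
    -- key indices
    set L : Fin (n+2) := Fin.last (n+1) with hL
    set M : Fin (n+2) := Fin.castSucc (Fin.last n) with hM
    set u := z L with hu'
    set v := z M with hv'
    set p₂ := α L with hp₂'
    set p₁ := α M with hp₁'
    set β := p₁ + p₂ with hβ'
    set g := v ^ (p₁ / β) * u ^ (p₂ / β) with hg'
    have hp₁ : 0 < p₁ := lt_of_lt_of_le hc (hcα M)
    have hp₂ : 0 < p₂ := lt_of_lt_of_le hc (hcα L)
    have hβ : 0 < β := by positivity
    have hvu : v ≤ u := hmono (le_of_lt (Fin.castSucc_lt_last (Fin.last n)))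
    have hv0 : 0 ≤ v := hz M
    have hu0 : 0 ≤ u := hz L
    have hg0 : 0 ≤ g := by positivity
    -- abbreviations for the "rest"
    set R1 := ∑ i : Fin n, α i.castSucc.castSucc * z i.castSucc.castSucc with hR1'
    set R2 := ∑ i : Fin n, α i.castSucc.castSucc * z i.castSucc.castSucc ^ 2 with hR2'
    set Rα := ∑ i : Fin n, α i.castSucc.castSucc with hRα'
    set Q := ∏ i : Fin n, z i.castSucc.castSucc ^ (2 * α i.castSucc.castSucc) with hQ'
    -- decompositions
    have hsumα : Rα + p₁ + p₂ = 1 := by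
      rw [hRα', hp₁', hp₂', ← hsum, Fin.sum_univ_castSucc, Fin.sum_univ_castSucc]
    have hRαpos : 0 ≤ Rα := Finset.sum_nonneg fun i _ => le_trans hc.le (hcα _)
    have hβ1 : β ≤ 1 := by rw [hβ']; linarith
    have hT : ∑ i, α i * z i ^ 2 = R2 + (p₁ * v ^ 2 + p₂ * u ^ 2) := by
      rw [Fin.sum_univ_castSucc, Fin.sum_univ_castSucc]; ring
    have hE : ∑ i, α i * z i = R1 + (p₁ * v + p₂ * u) := by
      rw [Fin.sum_univ_castSucc, Fin.sum_univ_castSucc]; ring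
    have hP : ∏ i, z i ^ (2 * α i) = Q * (v ^ (2 * p₁) * u ^ (2 * p₂)) := by
      rw [Fin.prod_univ_castSucc, Fin.prod_univ_castSucc]; ring
    -- the merged vectors
    set z' : Fin (n+1) → ℝ := Fin.snoc (fun i : Fin n => z i.castSucc.castSucc) g with hz''
    set α' : Fin (n+1) → ℝ := Fin.snoc (fun i : Fin n => α i.castSucc.castSucc) β with hα''
    have hcα' : ∀ i, c ≤ α' i := by
      intro i
      induction i using Fin.lastCases with
      | last => rw [hα'']; simp only [Fin.snoc_last]; linarith [hcα M]
      | cast i => rw [hα'']; simp only [Fin.snoc_castSucc]; exact hcα _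
    have hz' : ∀ i, 0 ≤ z' i := by
      intro i
      induction i using Fin.lastCases with
      | last => rw [hz'']; simp only [Fin.snoc_last]; exact hg0
      | cast i => rw [hz'']; simp only [Fin.snoc_castSucc]; exact hz _
    have hsum' : ∑ i, α' i = 1 := by
      rw [Fin.sum_univ_castSucc, hα'']
      simp only [Fin.snoc_castSucc, Fin.snoc_last]
      rw [← hRα']
      linarith
    have hvg : v ≤ g := by
      have h1 : v ^ (p₂ / β) ≤ u ^ (p₂ / β) := Real.rpow_le_rpow hv0 hvu (by positivity)
      have h2 : v ^ (p₁ / β) * v ^ (p₂ / β) = v := by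
        rw [← Real.rpow_add' hv0 (by positivity)]
        rw [show p₁ / β + p₂ / β = 1 by field_simp; linarith]
        exact Real.rpow_one v
      calc v = v ^ (p₁ / β) * v ^ (p₂ / β) := h2.symm
        _ ≤ v ^ (p₁ / β) * u ^ (p₂ / β) :=
            mul_le_mul_of_nonneg_left h1 (Real.rpow_nonneg hv0 _)
    have hmono' : Monotone z' := by
      intro i j hij
      induction j using Fin.lastCases with
      | last =>
        induction i using Fin.lastCases with
        | last => exact le_refl _
        | cast i =>
          rw [hz'']; simp only [Fin.snoc_castSucc, Fin.snoc_last]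
          exact le_trans (hmono (Fin.castSucc_le_castSucc_iff.mpr (Fin.le_last i.castSucc))) hvg
      | cast j =>
        induction i using Fin.lastCases with
        | last => exact absurd hij (not_le.mpr (Fin.castSucc_lt_last j))
        | cast i =>
          rw [hz'']; simp only [Fin.snoc_castSucc]
          exact hmono (Fin.castSucc_le_castSucc_iff.mpr (Fin.castSucc_le_castSucc_iff.mpr
            (Fin.castSucc_le_castSucc_iff.mp hij)))
    -- apply the induction hypothesis
    have IH := ih z' α' c hc hcα' hz' hsum' hmono'
    rw [Fin.sum_univ_castSucc, Fin.sum_univ_castSucc, Fin.prod_univ_castSucc, hz'', hα''] at IH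
    simp only [Fin.snoc_castSucc, Fin.snoc_last] at IH
    rw [← hR1', ← hR2', ← hQ'] at IH
    -- identify g ^ (2*β) with v^(2p₁) u^(2p₂)
    have hg2 : g ^ (2 * β) = v ^ (2 * p₁) * u ^ (2 * p₂) := by
      rw [hg', Real.mul_rpow (Real.rpow_nonneg hv0 _) (Real.rpow_nonneg hu0 _),
        ← Real.rpow_mul hv0, ← Real.rpow_mul hu0]
      rw [show p₁ / β * (2 * β) = 2 * p₁ by field_simp,
        show p₂ / β * (2 * β) = 2 * p₂ by field_simp]
    rw [hg2] at IH
    -- the key pair inequality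
    have hpairβ := my_pair_scaled hp₁ hp₂ hβ' hβ1 hc.le (hcα M) (hcα L) hu0 hv0
    rw [← hg'] at hpairβ
    -- AM-GM for the pair
    have hAMGM : β * g ≤ p₁ * v + p₂ * u := by
      have := Real.geom_mean_le_arith_mean2_weighted (by positivity : (0:ℝ) ≤ p₁/β)
        (by positivity : (0:ℝ) ≤ p₂/β) hv0 hu0 (by field_simp; linarith)
      rw [← hg'] at this
      have h2 := mul_le_mul_of_nonneg_left this hβ.le
      calc β * g ≤ β * (p₁/β * v + p₂/β * u) := h2
        _ = p₁ * v + p₂ * u := by field_simp; try ring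
    -- bound on the rest: R1 ≤ (1-β) * v = Rα * v
    have hR1v : R1 ≤ Rα * v := by
      rw [hR1', hRα', Finset.sum_mul]
      apply Finset.sum_le_sum
      intro i _
      have hzi : z i.castSucc.castSucc ≤ v := by
        rw [hv', hM]
        exact hmono (Fin.castSucc_le_castSucc_iff.mpr (Fin.le_last _))
      have hαi : 0 ≤ α i.castSucc.castSucc := le_trans hc.le (hcα _)
      exact mul_le_mul_of_nonneg_left hzi hαi
    have hR1pos : 0 ≤ R1 := Finset.sum_nonneg fun i _ =>
      mul_nonneg (le_trans hc.le (hcα _)) (hz _)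
    -- E + E' bound (multiplied by β)
    have hA1v : β * v ≤ p₁ * v + p₂ * u := by nlinarith
    have hEE' : β * ((R1 + (p₁ * v + p₂ * u)) + (R1 + β * g)) ≤ (p₁ * v + p₂ * u) + β * g := by
      have h1 : β * R1 ≤ β * (Rα * v) := mul_le_mul_of_nonneg_left hR1v hβ.le
      have h2 : Rα * (β * v) ≤ Rα * (p₁ * v + p₂ * u) := mul_le_mul_of_nonneg_left hA1v hRαpos
      have h3 : Rα * (β * v) ≤ Rα * (β * g) :=
        mul_le_mul_of_nonneg_left (mul_le_mul_of_nonneg_left hvg hβ.le) hRαpos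
      have hβRα : β = 1 - Rα := by linarith
      have h4 : β * (p₁*v + p₂*u) + Rα*(p₁*v+p₂*u) = p₁*v+p₂*u := by rw [hβRα]; ring
      have h5 : β * (β*g) + Rα*(β*g) = β*g := by rw [hβRα]; ring
      linarith [h1, h2, h3, h4, h5]
    have hδ : 0 ≤ (p₁ * v + p₂ * u) - β * g := by linarith
    -- key inequality : E² - E'² ≤ (1-c) * D
    have hkey : (R1 + (p₁ * v + p₂ * u)) ^ 2 - (R1 + β * g) ^ 2 ≤
        (1 - c) * ((p₁ * v ^ 2 + p₂ * u ^ 2) - β * g ^ 2) := by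
      have h1 := mul_le_mul_of_nonneg_right hEE' hδ
      have h4 : β * ((R1 + (p₁ * v + p₂ * u)) ^ 2 - (R1 + β * g) ^ 2) ≤
          β * ((1 - c) * ((p₁ * v ^ 2 + p₂ * u ^ 2) - β * g ^ 2)) := by linarith [h1, hpairβ]
      exact le_of_mul_le_mul_left h4 hβ
    -- finish
    rw [hT, hE, hP, div_mul_eq_mul_div, one_mul, le_div_iff₀ hc]
    rw [div_mul_eq_mul_div, one_mul, le_div_iff₀ hc] at IH
    linarith [IH, hkey]

lemma my_varid {N : ℕ} (w t : Fin N → ℝ) (hw : ∑ i, w i = 1) :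
    ∑ i, ∑ j, w i * w j * (t i - t j) ^ 2 =
      2 * (∑ i, w i * t i ^ 2) - 2 * (∑ i, w i * t i) ^ 2 := by
  set S := ∑ j, w j with hS
  set K := ∑ j, w j * t j with hK
  set T2 := ∑ j, w j * t j ^ 2 with hT2
  calc ∑ i, ∑ j, w i * w j * (t i - t j) ^ 2
      = ∑ i, (w i * t i ^ 2 * S - (w i * t i) * (2 * K) + w i * T2) := by
        refine Finset.sum_congr rfl fun i _ => ?_
        rw [hS, hK, hT2, Finset.mul_sum, Finset.mul_sum, Finset.mul_sum, Finset.mul_sum,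
          ← Finset.sum_sub_distrib, ← Finset.sum_add_distrib]
        exact Finset.sum_congr rfl fun j _ => by ring
    _ = 2 * T2 - 2 * K ^ 2 := by
        rw [Finset.sum_add_distrib, Finset.sum_sub_distrib, ← Finset.sum_mul, ← Finset.sum_mul,
          ← Finset.sum_mul, ← hS, ← hK, ← hT2, hw]
        ring
    _ = 2 * (∑ i, w i * t i ^ 2) - 2 * (∑ i, w i * t i) ^ 2 := by rw [← hK, ← hT2]

lemma my_supadd {x y : ℝ} (hx : 0 ≤ x) (hy : 0 ≤ y) {s : ℝ} (hs : 1 ≤ s) :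
    x ^ s + y ^ s ≤ (x + y) ^ s := by
  have h := NNReal.add_rpow_le_rpow_add (x.toNNReal) (y.toNNReal) hs
  have h2 := NNReal.coe_le_coe.mpr h
  simp only [NNReal.coe_rpow, NNReal.coe_add, Real.coe_toNNReal _ hx, Real.coe_toNNReal _ hy] at h2
  exact h2

lemma my_sq_rpow {a b : ℝ} (ha : 0 ≤ a) (hb : 0 ≤ b) {s : ℝ} (hs : 1 ≤ s) :
    ((a - b) ^ 2) ^ s ≤ (a ^ s - b ^ s) ^ 2 := by
  have main : ∀ a b : ℝ, 0 ≤ b → b ≤ a → ((a - b) ^ 2) ^ s ≤ (a ^ s - b ^ s) ^ 2 := by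
    intro a b hb0 hba
    have hab : 0 ≤ a - b := by linarith
    have h1 : (a - b) ^ s + b ^ s ≤ a ^ s := by
      have := my_supadd hab hb0 hs
      rw [sub_add_cancel] at this
      exact this
    have h2 : (0:ℝ) ≤ (a - b) ^ s := Real.rpow_nonneg hab s
    have h3 : ((a - b) ^ s) ^ 2 ≤ (a ^ s - b ^ s) ^ 2 := by
      apply pow_le_pow_left₀ h2 (by linarith)
    calc ((a - b) ^ 2) ^ s = (a - b) ^ (2 * s) := by
          rw [← Real.rpow_two (a-b), ← Real.rpow_mul hab]
      _ = ((a - b) ^ s) ^ 2 := by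
          rw [← Real.rpow_two ((a-b) ^ s), ← Real.rpow_mul hab]; ring_nf
      _ ≤ (a ^ s - b ^ s) ^ 2 := h3
  rcases le_total b a with h | h
  · exact main a b hb h
  · have := main b a ha h
    have e1 : (b - a) ^ 2 = (a - b) ^ 2 := by ring
    have e2 : (b ^ s - a ^ s) ^ 2 = (a ^ s - b ^ s) ^ 2 := by ring
    rw [e1, e2] at this
    exact this

lemma my_lemB {N : ℕ} (w t : Fin N → ℝ) (hw : ∑ i, w i = 1) (hw0 : ∀ i, 0 ≤ w i)
    (ht : ∀ i, 0 ≤ t i) {s : ℝ} (hs : 1 ≤ s) :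
    ∑ i, w i * t i ^ 2 - (∑ i, w i * t i) ^ 2 ≤
      (∑ i, w i * (t i ^ s) ^ 2 - (∑ i, w i * t i ^ s) ^ 2) ^ (1/s) := by
  have hs0 : (0:ℝ) < s := by linarith
  set V := ∑ i, w i * t i ^ 2 - (∑ i, w i * t i) ^ 2 with hV
  set V' := ∑ i, w i * (t i ^ s) ^ 2 - (∑ i, w i * t i ^ s) ^ 2 with hV'
  have hid : ∑ i, ∑ j, w i * w j * (t i - t j) ^ 2 = 2 * V := by
    rw [my_varid w t hw, hV]; ring
  have hid' : ∑ i, ∑ j, w i * w j * (t i ^ s - t j ^ s) ^ 2 = 2 * V' := by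
    rw [my_varid (fun i => w i) (fun i => t i ^ s) hw, hV']; ring
  have hVpos : 0 ≤ V := by
    have h0 : 0 ≤ ∑ i, ∑ j, w i * w j * (t i - t j) ^ 2 :=
      Finset.sum_nonneg fun i _ => Finset.sum_nonneg fun j _ =>
        mul_nonneg (mul_nonneg (hw0 i) (hw0 j)) (sq_nonneg _)
    rw [hid] at h0; linarith
  have hJ := Real.rpow_arith_mean_le_arith_mean_rpow (Finset.univ : Finset (Fin N × Fin N))
    (fun p => w p.1 * w p.2) (fun p => (t p.1 - t p.2) ^ 2)
    (fun p _ => mul_nonneg (hw0 _) (hw0 _))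
    (by rw [Fintype.sum_prod_type, ← Finset.sum_mul_sum, hw, mul_one])
    (fun p _ => sq_nonneg _) hs
  rw [Fintype.sum_prod_type, Fintype.sum_prod_type] at hJ
  have e1 : ∑ i, ∑ j, w i * w j * (t i - t j) ^ 2 = 2 * V := hid
  rw [e1] at hJ
  have hstep : ∑ i, ∑ j, w i * w j * ((t i - t j) ^ 2) ^ s ≤ 2 * V' := by
    rw [← hid']
    refine Finset.sum_le_sum fun i _ => Finset.sum_le_sum fun j _ => ?_
    exact mul_le_mul_of_nonneg_left (my_sq_rpow (ht i) (ht j) hs)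
      (mul_nonneg (hw0 i) (hw0 j))
  have h2V : (2 * V) ^ s ≤ 2 * V' := le_trans hJ hstep
  have hpow : 2 * V ^ s ≤ (2 * V) ^ s := by
    rw [Real.mul_rpow (by norm_num : (0:ℝ) ≤ 2) hVpos]
    have h21 : (2:ℝ) = 2 ^ (1:ℝ) := (Real.rpow_one 2).symm
    have h22 : (2:ℝ) ^ (1:ℝ) ≤ 2 ^ s := Real.rpow_le_rpow_of_exponent_le one_le_two hs
    nlinarith [Real.rpow_nonneg hVpos s]
  have hfin : V ^ s ≤ V' := by linarith
  have hVs : ((V ^ s) ^ (1/s)) = V := by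
    rw [← Real.rpow_mul hVpos, mul_one_div, div_self (ne_of_gt hs0), Real.rpow_one]
  calc V = (V ^ s) ^ (1/s) := hVs.symm
    _ ≤ V' ^ (1/s) := Real.rpow_le_rpow (Real.rpow_nonneg hVpos s) hfin (by positivity)

/-- Upper variance bound for the AM-GM gap: for `n ≥ 2`, `xᵢ ≥ 0`, weights `αᵢ > 0`
summing to 1, and `s ∈ [1,∞)`,
`∑ αᵢxᵢ − ∏ xᵢ^{αᵢ} ≤ (1/α_min) · Var_α(X^{s/2})^{1/s}`. -/
theorem amgm_gap_le_variance_bound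
    {n : ℕ} (hn : 2 ≤ n) (x : Fin n → ℝ) (hx : ∀ i, 0 ≤ x i)
    (α : Fin n → ℝ) (hα : ∀ i, 0 < α i) (hsum : ∑ i, α i = 1)
    {s : ℝ} (hs : 1 ≤ s) :
    ∑ i, α i * x i - ∏ i, x i ^ α i ≤
      (1 / ⨅ i, α i) *
        (∑ i, α i * (x i ^ (s / 2)) ^ 2 - (∑ i, α i * x i ^ (s / 2)) ^ 2) ^ (1 / s) := by
  obtain ⟨k, rfl⟩ : ∃ k, n = k + 1 := ⟨n - 1, by omega⟩
  set m := ⨅ i, α i with hm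
  obtain ⟨i₀, hi₀⟩ := Finite.exists_min α
  have hble : BddBelow (Set.range α) := Set.Finite.bddBelow (Set.finite_range α)
  have hmle : ∀ i, m ≤ α i := fun i => ciInf_le hble i
  have hmpos : 0 < m := lt_of_lt_of_le (hα i₀) (le_ciInf hi₀)
  set σ := Tuple.sort x with hσ
  have hσmono : Monotone (x ∘ σ) := Tuple.monotone_sort x
  set z : Fin (k+1) → ℝ := fun i => x (σ i) ^ ((1:ℝ)/2) with hzdef
  have hz0 : ∀ i, 0 ≤ z i := fun i => Real.rpow_nonneg (hx _) _
  have hzmono : Monotone z := fun i j hij => Real.rpow_le_rpow (hx _) (hσmono hij) (by norm_num)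
  have hsum' : ∑ i, α (σ i) = 1 := by rw [Equiv.sum_comp σ α]; exact hsum
  have ez2 : ∀ i, z i ^ 2 = x (σ i) := by
    intro i
    rw [hzdef]
    rw [← Real.rpow_two, ← Real.rpow_mul (hx _), show (1:ℝ)/2*2 = 1 by norm_num, Real.rpow_one]
  have ezp : ∀ i, z i ^ (2 * α (σ i)) = x (σ i) ^ (α (σ i)) := by
    intro i
    rw [hzdef, ← Real.rpow_mul (hx _), show (1:ℝ)/2*(2 * α (σ i)) = α (σ i) by ring]
  have ezs : ∀ i, z i ^ s = x (σ i) ^ (s/2) := by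
    intro i
    rw [hzdef, ← Real.rpow_mul (hx _), show (1:ℝ)/2*s = s/2 by ring]
  have hA := my_lemA k z (fun i => α (σ i)) m hmpos (fun i => hmle _) hz0 hsum' hzmono
  have hB := my_lemB (fun i => α (σ i)) z hsum' (fun i => (hα _).le) hz0 hs
  calc ∑ i, α i * x i - ∏ i, x i ^ α i
      = ∑ i, α (σ i) * z i ^ 2 - ∏ i, z i ^ (2 * α (σ i)) := by
        rw [show (∑ i, α (σ i) * z i ^ 2) = ∑ i, α (σ i) * x (σ i) from
            Finset.sum_congr rfl fun i _ => by rw [ez2],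
          show (∏ i, z i ^ (2 * α (σ i))) = ∏ i, x (σ i) ^ α (σ i) from
            Finset.prod_congr rfl fun i _ => by rw [ezp],
          Equiv.sum_comp σ (fun i => α i * x i), Equiv.prod_comp σ (fun i => x i ^ α i)]
    _ ≤ (1/m) * (∑ i, α (σ i) * z i ^ 2 - (∑ i, α (σ i) * z i) ^ 2) := hA
    _ ≤ (1/m) * ((∑ i, α (σ i) * (z i ^ s) ^ 2 - (∑ i, α (σ i) * z i ^ s) ^ 2) ^ (1/s)) :=
        mul_le_mul_of_nonneg_left hB (by positivity)
    _ = (1/m) * ((∑ i, α i * (x i ^ (s/2)) ^ 2 - (∑ i, α i * x i ^ (s/2)) ^ 2) ^ (1/s)) := by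
        rw [show (∑ i, α (σ i) * (z i ^ s) ^ 2) = ∑ i, α (σ i) * (x (σ i) ^ (s/2)) ^ 2 from
            Finset.sum_congr rfl fun i _ => by rw [ezs],
          show (∑ i, α (σ i) * z i ^ s) = ∑ i, α (σ i) * x (σ i) ^ (s/2) from
            Finset.sum_congr rfl fun i _ => by rw [ezs],
          Equiv.sum_comp σ (fun i => α i * (x i ^ (s/2)) ^ 2),
          Equiv.sum_comp σ (fun i => α i * x i ^ (s/2))]
end

section
/- Let n ≥ 2, let x₁,…,xₙ ≥ 0, and let α₁,…,αₙ > 0 with ∑ᵢ αᵢ = 1. Then for every r ∈ (0,1], (1/(1−α_min)) · Var_α(X^{r/2})^{1/r} ≤ ∑ᵢ αᵢ xᵢ − ∏ᵢ xᵢ^{αᵢ}, where α_min = minᵢ αᵢ. -/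
open Finset

private lemma rpow_sum_aux {n : ℕ} {x : ℝ} (hx : 0 < x) (f : Fin n → ℝ) :
    x ^ (∑ i, f i) = ∏ i, x ^ f i := by
  simp_rw [Real.rpow_def_of_pos hx, Finset.mul_sum, Real.exp_sum]

private lemma core_aux {n : ℕ} (y : Fin n → ℝ) (hy : ∀ i, 0 ≤ y i)
    (α : Fin n → ℝ) (hα : ∀ i, 0 < α i) (hsum : ∑ i, α i = 1)
    {m : ℝ} (hm0 : 0 < m) (hm1 : m < 1) (hmle : ∀ i, m ≤ α i) :
    m * ∑ i, α i * y i + (1 - m) * ∏ i, y i ^ α i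
      ≤ (∑ i, α i * y i ^ (1/2 : ℝ)) ^ 2 := by
  set s : Fin n → ℝ := fun i => y i ^ (1/2 : ℝ) with hs_def
  have hs : ∀ i, 0 ≤ s i := fun i => Real.rpow_nonneg (hy i) _
  have hss : ∀ i, s i * s i = y i := by
    intro i
    rw [hs_def]
    rw [← Real.rpow_add_of_nonneg (hy i) (by norm_num) (by norm_num)]
    norm_num
  have h1m : (0:ℝ) < 1 - m := by linarith
  by_cases hzero : ∃ i, y i = 0
  · obtain ⟨i0, hi0⟩ := hzero
    have hG : ∏ i, y i ^ α i = 0 :=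
      Finset.prod_eq_zero (mem_univ i0) (by rw [hi0]; exact Real.zero_rpow (hα i0).ne')
    rw [hG, mul_zero, add_zero]
    calc m * ∑ i, α i * y i = ∑ i, m * (α i * y i) := by rw [Finset.mul_sum]
      _ ≤ ∑ i, (α i * s i) ^ 2 := by
          refine Finset.sum_le_sum fun i _ => ?_
          have h2 : (α i * s i) ^ 2 = α i * (α i * y i) := by
            rw [sq, mul_mul_mul_comm, hss]; ring
          rw [h2]
          exact mul_le_mul_of_nonneg_right (hmle i) (mul_nonneg (hα i).le (hy i))
      _ ≤ (∑ i, α i * s i) ^ 2 :=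
          sum_sq_le_sq_sum_of_nonneg fun i _ => mul_nonneg (hα i).le (hs i)
  · push_neg at hzero
    have hy' : ∀ i, 0 < y i := fun i => (hy i).lt_of_ne (Ne.symm (hzero i))
    have hs' : ∀ i, 0 < s i := fun i => Real.rpow_pos_of_pos (hy' i) _
    set w : Fin n × Fin n → ℝ :=
      fun p => (α p.1 * α p.2 - if p.1 = p.2 then m * α p.1 else 0) / (1 - m) with hw_def
    set z : Fin n × Fin n → ℝ := fun p => s p.1 * s p.2 with hz_def
    have hw : ∀ p ∈ (univ : Finset (Fin n × Fin n)), 0 ≤ w p := by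
      intro p _
      apply div_nonneg _ h1m.le
      by_cases h : p.1 = p.2
      · simp only [h, if_true]
        have := hmle p.1
        nlinarith [(hα p.1).le, (hα p.2).le, hmle p.2, h ▸ (rfl : α p.1 = α p.1)]
      · simp only [h, if_false, sub_zero]
        exact mul_nonneg (hα p.1).le (hα p.2).le
    have hrow : ∀ i, ∑ j, (α i * α j - if i = j then m * α i else 0) = α i * (1 - m) := by
      intro i
      rw [Finset.sum_sub_distrib, ← Finset.mul_sum, hsum, Finset.sum_ite_eq]
      simp [mul_comm]
      ring
    have hcol : ∀ j, ∑ i, (α i * α j - if i = j then m * α i else 0) = α j * (1 - m) := by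
      intro j
      rw [Finset.sum_sub_distrib, ← Finset.sum_mul, hsum]
      have : ∑ i, (if i = j then m * α i else 0) = m * α j := by
        rw [Finset.sum_ite_eq' univ j (fun i => m * α i)]; simp
      rw [this]; ring
    have hw' : ∑ p, w p = 1 := by
      rw [hw_def, ← Finset.sum_div, Fintype.sum_prod_type]
      simp_rw [hrow]
      rw [← Finset.sum_mul, hsum, one_mul, div_self h1m.ne']
    have key := Real.geom_mean_le_arith_mean_weighted univ w z hw hw'
      (fun p _ => mul_nonneg (hs p.1) (hs p.2))
    -- compute the product side
    have hprod : ∏ p, z p ^ w p = ∏ i, y i ^ α i := by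
      have e1 : ∀ p : Fin n × Fin n, z p ^ w p = s p.1 ^ w p * s p.2 ^ w p := by
        intro p; rw [hz_def]; exact Real.mul_rpow (hs p.1) (hs p.2)
      calc ∏ p, z p ^ w p = ∏ p : Fin n × Fin n, s p.1 ^ w p * s p.2 ^ w p :=
            Finset.prod_congr rfl fun p _ => e1 p
        _ = (∏ p : Fin n × Fin n, s p.1 ^ w p) * ∏ p : Fin n × Fin n, s p.2 ^ w p :=
            Finset.prod_mul_distrib
        _ = (∏ i, s i ^ α i) * ∏ j, s j ^ α j := by
            rw [Fintype.prod_prod_type (fun p : Fin n × Fin n => s p.1 ^ w p),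
              Fintype.prod_prod_type_right (fun p : Fin n × Fin n => s p.2 ^ w p)]
            congr 1
            · refine Finset.prod_congr rfl fun i _ => ?_
              rw [← rpow_sum_aux (hs' i) (fun j => w (i, j))]
              congr 1
              rw [hw_def, ← Finset.sum_div]
              simp only
              rw [hrow i, mul_div_assoc, div_self h1m.ne', mul_one]
            · refine Finset.prod_congr rfl fun j _ => ?_
              rw [← rpow_sum_aux (hs' j) (fun i => w (i, j))]
              congr 1
              rw [hw_def, ← Finset.sum_div]
              simp only
              rw [hcol j, mul_div_assoc, div_self h1m.ne', mul_one]
        _ = ∏ i, s i ^ α i * s i ^ α i := by rw [← Finset.prod_mul_distrib]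
        _ = ∏ i, y i ^ α i := by
            refine Finset.prod_congr rfl fun i _ => ?_
            show (y i ^ (1/2:ℝ)) ^ α i * (y i ^ (1/2:ℝ)) ^ α i = y i ^ α i
            rw [← Real.rpow_mul (hy i), ← Real.rpow_add (hy' i)]
            congr 1
            ring
    -- compute the sum side
    have hsum2 : ∑ p, w p * z p
        = ((∑ i, α i * s i) ^ 2 - m * ∑ i, α i * y i) / (1 - m) := by
      have e2 : ∀ p : Fin n × Fin n, w p * z p
          = ((α p.1 * α p.2) * (s p.1 * s p.2)
            - (if p.1 = p.2 then (m * α p.1) * (s p.1 * s p.2) else 0)) / (1 - m) := by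
        intro p
        rw [hw_def, hz_def, div_mul_eq_mul_div, sub_mul, ite_mul, zero_mul]
      rw [Finset.sum_congr rfl fun p _ => e2 p, ← Finset.sum_div]
      congr 1
      rw [Finset.sum_sub_distrib]
      congr 1
      · rw [Fintype.sum_prod_type, sq, Finset.sum_mul_sum]
        exact Finset.sum_congr rfl fun i _ => Finset.sum_congr rfl fun j _ => by ring
      · rw [Fintype.sum_prod_type]
        have e3 : ∀ i : Fin n, ∑ j, (if i = j then (m * α i) * (s i * s j) else 0)
            = m * (α i * y i) := by
          intro i
          rw [Finset.sum_ite_eq univ i (fun j => (m * α i) * (s i * s j))]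
          simp [hss i]
          ring
        rw [Finset.sum_congr rfl fun i _ => e3 i, ← Finset.mul_sum]
    rw [hprod, hsum2] at key
    rw [le_div_iff₀ h1m] at key
    nlinarith [key]

private lemma rpow_add_le {r u v : ℝ} (hu : 0 ≤ u) (hv : 0 ≤ v) (hr0 : 0 < r) (hr1 : r ≤ 1) :
    (u + v) ^ r ≤ u ^ r + v ^ r := by
  have h := NNReal.rpow_add_le_add_rpow u.toNNReal v.toNNReal hr0.le hr1
  have h2 := NNReal.coe_le_coe.2 h
  push_cast at h2
  rwa [Real.coe_toNNReal u hu, Real.coe_toNNReal v hv] at h2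



/-- Lower variance bound for the AM-GM gap: for `n ≥ 2`, `xᵢ ≥ 0`, weights `αᵢ > 0`
summing to 1, and `r ∈ (0,1]`,
`(1/(1−α_min)) · Var_α(X^{r/2})^{1/r} ≤ ∑ αᵢxᵢ − ∏ xᵢ^{αᵢ}`. -/
theorem variance_bound_le_amgm_gap
    {n : ℕ} (hn : 2 ≤ n) (x : Fin n → ℝ) (hx : ∀ i, 0 ≤ x i)
    (α : Fin n → ℝ) (hα : ∀ i, 0 < α i) (hsum : ∑ i, α i = 1)
    {r : ℝ} (hr0 : 0 < r) (hr1 : r ≤ 1) :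
    (1 / (1 - ⨅ i, α i)) *
        (∑ i, α i * (x i ^ (r / 2)) ^ 2 - (∑ i, α i * x i ^ (r / 2)) ^ 2) ^ (1 / r) ≤
      ∑ i, α i * x i - ∏ i, x i ^ α i := by
  have hne : Nonempty (Fin n) := ⟨⟨0, by omega⟩⟩
  obtain ⟨k, hk⟩ := Finite.exists_min α
  set m : ℝ := ⨅ i, α i with hm_def
  have hmk : m = α k :=
    le_antisymm (ciInf_le (Finite.bddBelow_range α) k) (le_ciInf hk)
  have hm0 : 0 < m := hmk ▸ hα k
  have hmle : ∀ i, m ≤ α i := fun i => hmk ▸ hk i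
  -- m < 1
  have hm1 : m < 1 := by
    obtain ⟨j, hj⟩ : ∃ j : Fin n, j ≠ k := by
      by_cases h : k = ⟨0, by omega⟩
      · exact ⟨⟨1, by omega⟩, by simp [h, Fin.ext_iff]⟩
      · exact ⟨⟨0, by omega⟩, fun hc => h hc.symm⟩
    have h1 : α k + ∑ i ∈ univ.erase k, α i = 1 := by
      rw [Finset.add_sum_erase univ α (mem_univ k), hsum]
    have h2 : α j ≤ ∑ i ∈ univ.erase k, α i :=
      Finset.single_le_sum (fun i _ => (hα i).le) (Finset.mem_erase.2 ⟨hj, mem_univ j⟩)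
    rw [hmk]
    have := hα j
    linarith
  have h1m : (0:ℝ) < 1 - m := by linarith
  set A := ∑ i, α i * x i with hA_def
  set G := ∏ i, x i ^ α i with hG_def
  have hα' : ∀ i ∈ (univ : Finset (Fin n)), 0 ≤ α i := fun i _ => (hα i).le
  have hGA : G ≤ A :=
    Real.geom_mean_le_arith_mean_weighted univ α x hα' hsum fun i _ => hx i
  have hG0 : 0 ≤ G := Finset.prod_nonneg fun i _ => Real.rpow_nonneg (hx i) _
  set T := ∑ i, α i * x i ^ r with hT_def
  have hT0 : 0 ≤ T := Finset.sum_nonneg fun i _ => mul_nonneg (hα i).le (Real.rpow_nonneg (hx i) _)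
  -- apply the core lemma to y := x ^ r
  have hcore := core_aux (fun i => x i ^ r) (fun i => Real.rpow_nonneg (hx i) _)
    α hα hsum hm0 hm1 hmle
  have hsq : ∀ i, (x i ^ r) ^ (1/2 : ℝ) = x i ^ (r / 2) := by
    intro i
    rw [← Real.rpow_mul (hx i), mul_one_div]
  have hprodr : ∏ i, (x i ^ r) ^ α i = G ^ r := by
    have e : ∀ i, (x i ^ r) ^ α i = (x i ^ α i) ^ r := by
      intro i
      rw [← Real.rpow_mul (hx i), ← Real.rpow_mul (hx i), mul_comm]
    rw [Finset.prod_congr rfl fun i _ => e i,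
      Real.finset_prod_rpow univ _ (fun i _ => Real.rpow_nonneg (hx i) _) r]
  simp_rw [hsq, hprodr] at hcore
  -- variance expression
  have hvar : ∀ i, (x i ^ (r/2)) ^ 2 = x i ^ r := by
    intro i
    rw [← Real.rpow_natCast (x i ^ (r/2)) 2, ← Real.rpow_mul (hx i)]
    norm_num
  set V := ∑ i, α i * (x i ^ (r / 2)) ^ 2 - (∑ i, α i * x i ^ (r / 2)) ^ 2 with hV_def
  have hVT : V = T - (∑ i, α i * x i ^ (r / 2)) ^ 2 := by
    rw [hV_def, hT_def]
    congr 1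
    exact Finset.sum_congr rfl fun i _ => by rw [hvar i]
  -- V ≥ 0 by Jensen
  have hV0 : 0 ≤ V := by
    have := Real.pow_arith_mean_le_arith_mean_pow univ α (fun i => x i ^ (r/2)) hα' hsum
      (fun i _ => Real.rpow_nonneg (hx i) _) 2
    rw [hV_def]
    simpa using this
  -- V ≤ (1-m) * (T - G^r)
  have hstep1 : V ≤ (1 - m) * (T - G ^ r) := by
    rw [hVT]
    nlinarith [hcore]
  -- T ≤ A ^ r
  have hTA : T ≤ A ^ r := by
    have h1r : (1:ℝ) ≤ 1 / r := by
      rw [le_div_iff₀ hr0]; linarith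
    have h := Real.rpow_arith_mean_le_arith_mean_rpow univ α (fun i => x i ^ r) hα' hsum
      (fun i _ => Real.rpow_nonneg (hx i) _) h1r
    have e : ∀ i, (x i ^ r) ^ (1/r : ℝ) = x i := by
      intro i
      rw [← Real.rpow_mul (hx i), mul_one_div, div_self hr0.ne', Real.rpow_one]
    simp_rw [e] at h
    -- h : T ^ (1/r) ≤ A
    calc T = (T ^ (1/r : ℝ)) ^ r := by
          rw [← Real.rpow_mul hT0, one_div_mul_cancel hr0.ne', Real.rpow_one]
      _ ≤ A ^ r := Real.rpow_le_rpow (Real.rpow_nonneg hT0 _) h hr0.le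
  -- A ^ r ≤ (A - G)^r + G^r
  have hsub : A ^ r ≤ (A - G) ^ r + G ^ r := by
    have := rpow_add_le (sub_nonneg.2 hGA) hG0 hr0 hr1
    rwa [sub_add_cancel] at this
  have hstep2 : V ≤ (1 - m) * (A - G) ^ r := by
    calc V ≤ (1 - m) * (T - G ^ r) := hstep1
      _ ≤ (1 - m) * (A - G) ^ r := by
          apply mul_le_mul_of_nonneg_left _ h1m.le
          linarith
  -- take rpow (1/r) and conclude
  have hfin : V ^ (1/r : ℝ) ≤ (1 - m) ^ (1/r : ℝ) * (A - G) := by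
    calc V ^ (1/r : ℝ) ≤ ((1 - m) * (A - G) ^ r) ^ (1/r : ℝ) :=
          Real.rpow_le_rpow hV0 hstep2 (by positivity)
      _ = (1 - m) ^ (1/r : ℝ) * ((A - G) ^ r) ^ (1/r : ℝ) :=
          Real.mul_rpow h1m.le (Real.rpow_nonneg (sub_nonneg.2 hGA) _)
      _ = (1 - m) ^ (1/r : ℝ) * (A - G) := by
          rw [← Real.rpow_mul (sub_nonneg.2 hGA), mul_one_div, div_self hr0.ne',
            Real.rpow_one]
  have hexp : (1 - m) ^ (1/r : ℝ) ≤ 1 - m := by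
    have := Real.rpow_le_rpow_of_exponent_ge h1m (by linarith)
      (by rw [le_div_iff₀ hr0]; linarith : (1:ℝ) ≤ 1/r)
    rwa [Real.rpow_one] at this
  calc (1 / (1 - m)) * V ^ (1/r : ℝ)
      ≤ (1 / (1 - m)) * ((1 - m) ^ (1/r : ℝ) * (A - G)) := by
        apply mul_le_mul_of_nonneg_left hfin (by positivity)
    _ ≤ (1 / (1 - m)) * ((1 - m) * (A - G)) := by
        apply mul_le_mul_of_nonneg_left _ (by positivity)
        exact mul_le_mul_of_nonneg_right hexp (sub_nonneg.2 hGA)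
    _ = A - G := by field_simp
end

section
/- Let n ≥ 2, let x₁,…,xₙ ≥ 0, and let α₁,…,αₙ > 0 with ∑ᵢ αᵢ = 1. Then Var_α(X^{1/2}) ≤ ∑ᵢ αᵢ xᵢ − ∏ᵢ xᵢ^{αᵢ}. -/
/-- `Var_α(X^{1/2}) ≤ E_α X − Π_α X` for `n ≥ 2`, `xᵢ ≥ 0`, and weights `αᵢ > 0`
summing to 1. -/
theorem variance_sqrt_le_amgm_gap
    {n : ℕ} (hn : 2 ≤ n) (x : Fin n → ℝ) (hx : ∀ i, 0 ≤ x i)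
    (α : Fin n → ℝ) (hα : ∀ i, 0 < α i) (hsum : ∑ i, α i = 1) :
    ∑ i, α i * (x i ^ ((1 : ℝ) / 2)) ^ 2 - (∑ i, α i * x i ^ ((1 : ℝ) / 2)) ^ 2 ≤
      ∑ i, α i * x i - ∏ i, x i ^ α i := by
  have hsq : ∀ i, (x i ^ ((1 : ℝ) / 2)) ^ 2 = x i := by
    intro i
    rw [← Real.rpow_natCast (x i ^ ((1:ℝ)/2)) 2, ← Real.rpow_mul (hx i)]
    norm_num
  have h1 : ∑ i, α i * (x i ^ ((1 : ℝ) / 2)) ^ 2 = ∑ i, α i * x i := by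
    simp_rw [hsq]
  rw [h1]
  have hgm : ∏ i, (x i ^ ((1:ℝ)/2)) ^ α i ≤ ∑ i, α i * x i ^ ((1:ℝ)/2) :=
    Real.geom_mean_le_arith_mean_weighted Finset.univ α (fun i => x i ^ ((1:ℝ)/2))
      (fun i _ => (hα i).le) hsum (fun i _ => Real.rpow_nonneg (hx i) _)
  have hprod : ∏ i, x i ^ α i = (∏ i, (x i ^ ((1:ℝ)/2)) ^ α i) ^ 2 := by
    rw [← Finset.prod_pow]
    refine Finset.prod_congr rfl fun i _ => ?_
    rw [← Real.rpow_natCast ((x i ^ ((1:ℝ)/2)) ^ α i) 2, ← Real.rpow_mul (hx i),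
      ← Real.rpow_mul (hx i)]
    ring_nf
  have h2 : ∏ i, x i ^ α i ≤ (∑ i, α i * x i ^ ((1:ℝ)/2)) ^ 2 := by
    rw [hprod]
    exact pow_le_pow_left₀ (Finset.prod_nonneg fun i _ =>
      Real.rpow_nonneg (Real.rpow_nonneg (hx i) _) _) hgm 2
  linarith
end

section
/- Let p ≥ 2, let X ∈ L^p be a real valued random variable on a probability space, and let 0 < r ≤ 2 ≤ s ≤ p. Then Var(X₊^{r/2})^{2/r} + Var(X₋^{r/2})^{2/r} ≤ Var(X) ≤ 2 (Var(X₊^{s/2})^{2/s} + Var(X₋^{s/2})^{2/s}), where X₊ = max{X,0} and X₋ = −min{X,0}. -/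
open MeasureTheory ProbabilityTheory
open scoped ENNReal NNReal

private lemma real_add_rpow_le {a b α : ℝ} (ha : 0 ≤ a) (hb : 0 ≤ b) (hα0 : 0 ≤ α)
    (hα1 : α ≤ 1) : (a + b) ^ α ≤ a ^ α + b ^ α := by
  have h := NNReal.rpow_add_le_add_rpow a.toNNReal b.toNNReal hα0 hα1
  have h2 := (NNReal.coe_le_coe).2 h
  push_cast at h2
  rwa [Real.coe_toNNReal a ha, Real.coe_toNNReal b hb] at h2

private lemma sq_rpow_sub_le_aux {α x y : ℝ} (hα0 : 0 < α) (hα1 : α ≤ 1)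
    (hy : 0 ≤ y) (hyx : y ≤ x) :
    (x ^ α - y ^ α) ^ 2 ≤ ((x - y) ^ 2) ^ α := by
  have hxy : 0 ≤ x - y := sub_nonneg.2 hyx
  have h1 : x ^ α ≤ (x - y) ^ α + y ^ α := by
    have := real_add_rpow_le hxy hy hα0.le hα1
    rwa [sub_add_cancel] at this
  have h2 : 0 ≤ x ^ α - y ^ α := sub_nonneg.2 (Real.rpow_le_rpow hy hyx hα0.le)
  have h3 : x ^ α - y ^ α ≤ (x - y) ^ α := by linarith
  calc (x ^ α - y ^ α) ^ 2 ≤ ((x - y) ^ α) ^ 2 := pow_le_pow_left₀ h2 h3 2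
    _ = ((x - y) ^ 2) ^ α := by
        rw [← Real.rpow_natCast ((x - y) ^ α) 2, ← Real.rpow_natCast (x - y) 2,
          ← Real.rpow_mul hxy, ← Real.rpow_mul hxy, mul_comm]

private lemma sq_rpow_sub_le {α x y : ℝ} (hα0 : 0 < α) (hα1 : α ≤ 1)
    (hx : 0 ≤ x) (hy : 0 ≤ y) :
    (x ^ α - y ^ α) ^ 2 ≤ ((x - y) ^ 2) ^ α := by
  rcases le_total y x with h | h
  · exact sq_rpow_sub_le_aux hα0 hα1 hy h
  · have h' := sq_rpow_sub_le_aux hα0 hα1 hx h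
    calc (x ^ α - y ^ α) ^ 2 = (y ^ α - x ^ α) ^ 2 := by ring
      _ ≤ ((y - x) ^ 2) ^ α := h'
      _ = ((x - y) ^ 2) ^ α := by rw [show (y - x) ^ 2 = (x - y) ^ 2 by ring]

private lemma rpow_le_one_add {t α : ℝ} (ht : 0 ≤ t) (hα0 : 0 ≤ α) (hα1 : α ≤ 1) :
    t ^ α ≤ 1 + t := by
  rcases le_total t 1 with h | h
  · have := Real.rpow_le_one ht h hα0
    linarith
  · have := Real.rpow_le_rpow_of_exponent_le h hα1
    rw [Real.rpow_one] at this
    linarith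

private lemma variance_le_integral_sub_sq {Ω : Type*} [MeasurableSpace Ω] {μ : Measure Ω}
    [IsProbabilityMeasure μ] {Y : Ω → ℝ} (hY : MemLp Y 2 μ) (c : ℝ) :
    variance Y μ ≤ ∫ ω, (Y ω - c) ^ 2 ∂μ := by
  have hY1 : Integrable Y μ := hY.integrable one_le_two
  have hY2 : Integrable (fun ω => Y ω ^ 2) μ := hY.integrable_sq
  have hexp : ∫ ω, (Y ω - c) ^ 2 ∂μ
      = (∫ ω, Y ω ^ 2 ∂μ) - 2 * c * (∫ ω, Y ω ∂μ) + c ^ 2 := by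
    have h : ∀ ω, (Y ω - c) ^ 2 = Y ω ^ 2 - (2 * c) * Y ω + c ^ 2 := fun ω => by ring
    simp_rw [h]
    rw [integral_add (show Integrable (fun ω => Y ω ^ 2 - 2 * c * Y ω) μ from
        hY2.sub (hY1.const_mul _)) (integrable_const _),
      integral_sub hY2 (hY1.const_mul _), integral_const_mul, integral_const]
    simp [measure_univ]
  have hdef : variance Y μ = (∫ ω, Y ω ^ 2 ∂μ) - (∫ ω, Y ω ∂μ) ^ 2 := by
    rw [variance_eq_sub hY]; rfl
  rw [hdef, hexp]
  nlinarith [sq_nonneg ((∫ ω, Y ω ∂μ) - c)]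

private lemma variance_eq_int {Ω : Type*} [MeasurableSpace Ω] {μ : Measure Ω}
    [IsProbabilityMeasure μ] {Y : Ω → ℝ} (hY : MemLp Y 2 μ) :
    variance Y μ = ∫ ω, (Y ω - ∫ x, Y x ∂μ) ^ 2 ∂μ := by
  rw [variance_eq_integral hY.aemeasurable]

private lemma variance_rpow_le {Ω : Type*} [MeasurableSpace Ω] {μ : Measure Ω}
    [IsProbabilityMeasure μ] {Z : Ω → ℝ} (hZpos : ∀ ω, 0 ≤ Z ω) (hZ : MemLp Z 2 μ)
    {α : ℝ} (hα0 : 0 < α) (hα1 : α ≤ 1) (hZα : MemLp (fun ω => Z ω ^ α) 2 μ) :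
    variance (fun ω => Z ω ^ α) μ ≤ variance Z μ ^ α := by
  set m := ∫ ω, Z ω ∂μ with hm
  have hm0 : 0 ≤ m := integral_nonneg hZpos
  have hf : Integrable (fun ω => (Z ω - m) ^ 2) μ := (hZ.sub (memLp_const m)).integrable_sq
  have hmeas : AEStronglyMeasurable (fun ω => ((Z ω - m) ^ 2) ^ α) μ :=
    (Real.continuous_rpow_const hα0.le).comp_aestronglyMeasurable hf.aestronglyMeasurable
  have hgi : Integrable (fun ω => ((Z ω - m) ^ 2) ^ α) μ := by
    refine Integrable.mono' ((integrable_const 1).add hf) hmeas ?_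
    filter_upwards with ω
    rw [Real.norm_eq_abs, abs_of_nonneg (Real.rpow_nonneg (sq_nonneg _) _)]
    exact rpow_le_one_add (sq_nonneg _) hα0.le hα1
  have step1 : variance (fun ω => Z ω ^ α) μ ≤ ∫ ω, (Z ω ^ α - m ^ α) ^ 2 ∂μ :=
    variance_le_integral_sub_sq hZα (m ^ α)
  have hint1 : Integrable (fun ω => (Z ω ^ α - m ^ α) ^ 2) μ :=
    (hZα.sub (memLp_const (m ^ α))).integrable_sq
  have step2 : ∫ ω, (Z ω ^ α - m ^ α) ^ 2 ∂μ ≤ ∫ ω, ((Z ω - m) ^ 2) ^ α ∂μ :=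
    integral_mono hint1 hgi fun ω => sq_rpow_sub_le hα0 hα1 (hZpos ω) hm0
  have step3 : ∫ ω, ((Z ω - m) ^ 2) ^ α ∂μ ≤ (∫ ω, (Z ω - m) ^ 2 ∂μ) ^ α :=
    (Real.concaveOn_rpow hα0.le hα1).le_map_integral
      ((Real.continuous_rpow_const hα0.le).continuousOn) isClosed_Ici
      (Filter.Eventually.of_forall fun ω => Set.mem_Ici.2 (sq_nonneg _)) hf hgi
  have hvar : ∫ ω, (Z ω - m) ^ 2 ∂μ = variance Z μ := (variance_eq_int hZ).symm
  calc variance (fun ω => Z ω ^ α) μ ≤ ∫ ω, (Z ω ^ α - m ^ α) ^ 2 ∂μ := step1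
    _ ≤ ∫ ω, ((Z ω - m) ^ 2) ^ α ∂μ := step2
    _ ≤ (∫ ω, (Z ω - m) ^ 2 ∂μ) ^ α := step3
    _ = variance Z μ ^ α := by rw [hvar]

private lemma memℒp_rpow_two {Ω : Type*} [MeasurableSpace Ω] {μ : Measure Ω}
    [IsFiniteMeasure μ] {Z : Ω → ℝ} {p t : ℝ} (hZpos : ∀ ω, 0 ≤ Z ω)
    (hZ : MemLp Z (ENNReal.ofReal p) μ) (ht : 0 < t) (htp : 2 * t ≤ p) :
    MemLp (fun ω => Z ω ^ t) 2 μ := by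
  have h := hZ.norm_rpow_div (ENNReal.ofReal t)
  have heq : (fun ω => ‖Z ω‖ ^ (ENNReal.ofReal t).toReal) = fun ω => Z ω ^ t := by
    funext ω
    rw [Real.norm_eq_abs, abs_of_nonneg (hZpos ω), ENNReal.toReal_ofReal ht.le]
  rw [heq] at h
  refine h.mono_exponent ?_
  rw [← ENNReal.ofReal_div_of_pos ht]
  have h2 : (2 : ℝ) ≤ p / t := (le_div_iff₀ ht).2 (by linarith)
  calc (2 : ℝ≥0∞) = ENNReal.ofReal 2 := by norm_num
    _ ≤ ENNReal.ofReal (p / t) := ENNReal.ofReal_le_ofReal h2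

/-- For `p ≥ 2`, a real valued `X ∈ L^p` on a probability space, and `0 < r ≤ 2 ≤ s ≤ p`,
`Var(X₊^{r/2})^{2/r} + Var(X₋^{r/2})^{2/r} ≤ Var(X)
  ≤ 2 (Var(X₊^{s/2})^{2/s} + Var(X₋^{s/2})^{2/s})`. -/
theorem variance_parts_rpow_bounds
    {Ω : Type*} {mΩ : MeasurableSpace Ω} {μ : Measure Ω} [IsProbabilityMeasure μ]
    {p : ℝ} (hp : 2 ≤ p)
    {X : Ω → ℝ} (hX : MemLp X (ENNReal.ofReal p) μ)
    {r s : ℝ} (hr0 : 0 < r) (hr2 : r ≤ 2) (h2s : 2 ≤ s) (hsp : s ≤ p) :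
    (variance (fun ω => max (X ω) 0 ^ (r / 2)) μ) ^ (2 / r) +
        (variance (fun ω => (-min (X ω) 0) ^ (r / 2)) μ) ^ (2 / r) ≤ variance X μ ∧
      variance X μ ≤
        2 * ((variance (fun ω => max (X ω) 0 ^ (s / 2)) μ) ^ (2 / s) +
          (variance (fun ω => (-min (X ω) 0) ^ (s / 2)) μ) ^ (2 / s)) := by
  have hp0 : (0:ℝ) < p := lt_of_lt_of_le two_pos hp
  set A : Ω → ℝ := fun ω => max (X ω) 0 with hA
  set B : Ω → ℝ := fun ω => -min (X ω) 0 with hB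
  have hApos : ∀ ω, 0 ≤ A ω := fun ω => le_max_right _ _
  have hBpos : ∀ ω, 0 ≤ B ω := fun ω => neg_nonneg.2 (min_le_right _ _)
  have h2le : (2 : ℝ≥0∞) ≤ ENNReal.ofReal p := by
    calc (2 : ℝ≥0∞) = ENNReal.ofReal 2 := by norm_num
      _ ≤ ENNReal.ofReal p := ENNReal.ofReal_le_ofReal hp
  have hAp : MemLp A (ENNReal.ofReal p) μ := by
    refine hX.of_le (hX.1.sup aestronglyMeasurable_const) ?_
    filter_upwards with ω
    rw [Real.norm_eq_abs, Real.norm_eq_abs, abs_of_nonneg (hApos ω)]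
    exact max_le (le_abs_self _) (abs_nonneg _)
  have hBp : MemLp B (ENNReal.ofReal p) μ := by
    refine hX.of_le ((hX.1.inf aestronglyMeasurable_const).neg) ?_
    filter_upwards with ω
    rw [Real.norm_eq_abs, Real.norm_eq_abs, abs_of_nonneg (hBpos ω)]
    simp only [hB]
    rcases le_total (X ω) 0 with h | h
    · rw [min_eq_left h]; exact neg_le_abs _
    · rw [min_eq_right h]; simpa using abs_nonneg (X ω)
  have hX2 : MemLp X 2 μ := hX.mono_exponent h2le
  have hA2 : MemLp A 2 μ := hAp.mono_exponent h2le
  have hB2 : MemLp B 2 μ := hBp.mono_exponent h2le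
  have hAr : MemLp (fun ω => A ω ^ (r / 2)) 2 μ :=
    memℒp_rpow_two hApos hAp (by linarith) (by linarith)
  have hBr : MemLp (fun ω => B ω ^ (r / 2)) 2 μ :=
    memℒp_rpow_two hBpos hBp (by linarith) (by linarith)
  have hAs : MemLp (fun ω => A ω ^ (s / 2)) 2 μ :=
    memℒp_rpow_two hApos hAp (by linarith) (by linarith)
  have hBs : MemLp (fun ω => B ω ^ (s / 2)) 2 μ :=
    memℒp_rpow_two hBpos hBp (by linarith) (by linarith)
  set a := ∫ ω, A ω ∂μ with ha
  set b := ∫ ω, B ω ∂μ with hb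
  have ha0 : 0 ≤ a := integral_nonneg hApos
  have hb0 : 0 ≤ b := integral_nonneg hBpos
  have hXeq : ∀ ω, X ω = A ω - B ω := fun ω => by
    simp only [hA, hB, sub_neg_eq_add, max_add_min, add_zero]
  have hXab : ∫ ω, X ω ∂μ = a - b := by
    rw [integral_congr_ae (Filter.Eventually.of_forall hXeq),
      integral_sub (hA2.integrable one_le_two) (hB2.integrable one_le_two)]
  have hsq : ∀ ω, X ω ^ 2 = A ω ^ 2 + B ω ^ 2 := fun ω => by
    rcases le_total (X ω) 0 with h | h
    · simp only [hA, hB, max_eq_right h, min_eq_left h]; ring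
    · simp only [hA, hB, max_eq_left h, min_eq_right h]; ring
  have hEX2 : ∫ ω, X ω ^ 2 ∂μ = (∫ ω, A ω ^ 2 ∂μ) + ∫ ω, B ω ^ 2 ∂μ := by
    rw [integral_congr_ae (Filter.Eventually.of_forall hsq),
      integral_add hA2.integrable_sq hB2.integrable_sq]
  have dX : variance X μ = (∫ ω, X ω ^ 2 ∂μ) - (∫ ω, X ω ∂μ) ^ 2 := by
    rw [variance_eq_sub hX2]; rfl
  have dA : variance A μ = (∫ ω, A ω ^ 2 ∂μ) - a ^ 2 := by
    rw [variance_eq_sub hA2]; rfl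
  have dB : variance B μ = (∫ ω, B ω ^ 2 ∂μ) - b ^ 2 := by
    rw [variance_eq_sub hB2]; rfl
  have lower : variance A μ + variance B μ ≤ variance X μ := by
    rw [dX, dA, dB, hEX2, hXab]
    nlinarith [mul_nonneg ha0 hb0]
  have upper2 : variance X μ ≤ 2 * variance A μ + 2 * variance B μ := by
    have hXv : variance X μ = ∫ ω, (X ω - (a - b)) ^ 2 ∂μ := by
      rw [variance_eq_int hX2, hXab]
    have hAv : variance A μ = ∫ ω, (A ω - a) ^ 2 ∂μ := variance_eq_int hA2
    have hBv : variance B μ = ∫ ω, (B ω - b) ^ 2 ∂μ := variance_eq_int hB2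
    have hiA : Integrable (fun ω => (A ω - a) ^ 2) μ := (hA2.sub (memLp_const a)).integrable_sq
    have hiB : Integrable (fun ω => (B ω - b) ^ 2) μ := (hB2.sub (memLp_const b)).integrable_sq
    have hiX : Integrable (fun ω => (X ω - (a - b)) ^ 2) μ :=
      (hX2.sub (memLp_const _)).integrable_sq
    have hptw : ∀ ω, (X ω - (a - b)) ^ 2 ≤ 2 * (A ω - a) ^ 2 + 2 * (B ω - b) ^ 2 := fun ω => by
      have h2 : X ω - (a - b) = (A ω - a) - (B ω - b) := by rw [hXeq ω]; ring
      rw [h2]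
      nlinarith [sq_nonneg ((A ω - a) + (B ω - b))]
    rw [hXv, hAv, hBv]
    calc ∫ ω, (X ω - (a - b)) ^ 2 ∂μ
        ≤ ∫ ω, (2 * (A ω - a) ^ 2 + 2 * (B ω - b) ^ 2) ∂μ :=
          integral_mono hiX ((hiA.const_mul 2).add (hiB.const_mul 2)) hptw
      _ = 2 * ∫ ω, (A ω - a) ^ 2 ∂μ + 2 * ∫ ω, (B ω - b) ^ 2 ∂μ := by
          rw [integral_add (hiA.const_mul 2) (hiB.const_mul 2), integral_const_mul,
            integral_const_mul]
  have hr2' : r / 2 ≤ 1 := by linarith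
  have hr20 : (0:ℝ) < r / 2 := by linarith
  have hs20 : (0:ℝ) < s / 2 := by linarith
  have hs21 : (1:ℝ) ≤ s / 2 := by linarith
  have inv_r : (2:ℝ) / r = (r / 2)⁻¹ := by rw [inv_div]
  have inv_s : (2:ℝ) / s = (s / 2)⁻¹ := by rw [inv_div]
  have lowA : variance (fun ω => A ω ^ (r / 2)) μ ^ (2 / r) ≤ variance A μ := by
    have h := variance_rpow_le hApos hA2 hr20 hr2' hAr
    have h2 := Real.rpow_le_rpow (variance_nonneg _ _) h (by positivity : (0:ℝ) ≤ 2 / r)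
    rw [inv_r, Real.rpow_rpow_inv (variance_nonneg _ _) (ne_of_gt hr20)] at h2
    rwa [inv_r]
  have lowB : variance (fun ω => B ω ^ (r / 2)) μ ^ (2 / r) ≤ variance B μ := by
    have h := variance_rpow_le hBpos hB2 hr20 hr2' hBr
    have h2 := Real.rpow_le_rpow (variance_nonneg _ _) h (by positivity : (0:ℝ) ≤ 2 / r)
    rw [inv_r, Real.rpow_rpow_inv (variance_nonneg _ _) (ne_of_gt hr20)] at h2
    rwa [inv_r]
  have upA : variance A μ ≤ variance (fun ω => A ω ^ (s / 2)) μ ^ (2 / s) := by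
    have hAeq : (fun ω => (A ω ^ (s / 2)) ^ (s / 2)⁻¹) = A :=
      funext fun ω => Real.rpow_rpow_inv (hApos ω) (ne_of_gt hs20)
    have h := variance_rpow_le (Z := fun ω => A ω ^ (s / 2))
      (fun ω => Real.rpow_nonneg (hApos ω) _) hAs (inv_pos.2 hs20) (inv_le_one_of_one_le₀ hs21)
      (by show MemLp (fun ω => (A ω ^ (s / 2)) ^ (s / 2)⁻¹) 2 μ; rw [hAeq]; exact hA2)
    rw [show (fun ω => (fun ω => A ω ^ (s / 2)) ω ^ (s / 2)⁻¹)
        = (fun ω => (A ω ^ (s / 2)) ^ (s / 2)⁻¹) from rfl, hAeq] at h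
    rwa [inv_s]
  have upB : variance B μ ≤ variance (fun ω => B ω ^ (s / 2)) μ ^ (2 / s) := by
    have hBeq : (fun ω => (B ω ^ (s / 2)) ^ (s / 2)⁻¹) = B :=
      funext fun ω => Real.rpow_rpow_inv (hBpos ω) (ne_of_gt hs20)
    have h := variance_rpow_le (Z := fun ω => B ω ^ (s / 2))
      (fun ω => Real.rpow_nonneg (hBpos ω) _) hBs (inv_pos.2 hs20) (inv_le_one_of_one_le₀ hs21)
      (by show MemLp (fun ω => (B ω ^ (s / 2)) ^ (s / 2)⁻¹) 2 μ; rw [hBeq]; exact hB2)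
    rw [show (fun ω => (fun ω => B ω ^ (s / 2)) ω ^ (s / 2)⁻¹)
        = (fun ω => (B ω ^ (s / 2)) ^ (s / 2)⁻¹) from rfl, hBeq] at h
    rwa [inv_s]
  constructor
  · calc variance (fun ω => A ω ^ (r / 2)) μ ^ (2 / r)
        + variance (fun ω => B ω ^ (r / 2)) μ ^ (2 / r)
        ≤ variance A μ + variance B μ := add_le_add lowA lowB
      _ ≤ variance X μ := lower
  · calc variance X μ ≤ 2 * variance A μ + 2 * variance B μ := upper2
      _ ≤ 2 * (variance (fun ω => A ω ^ (s / 2)) μ ^ (2 / s)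
          + variance (fun ω => B ω ^ (s / 2)) μ ^ (2 / s)) := by linarith
end

section
/- Let D be a measurable subset of a probability space with 0 < P(D) < 1, and let X = −𝟙_D. Let 𝓑₁ be the sub-σ-algebra generated by the set {X ≥ 0}. Then Var(X) < Var(X₋) + Var(E(X₋ | 𝓑₁)) = 2 Var(X), where X₋ = −min{X,0}. -/
open MeasureTheory ProbabilityTheory

lemma indicator_var_aux {Ω : Type*} {mΩ : MeasurableSpace Ω} {μ : Measure Ω}
    [IsProbabilityMeasure μ] {D : Set Ω} (hD : MeasurableSet D) :
    Integrable (D.indicator fun _ => (1 : ℝ)) μ ∧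
      variance (D.indicator fun _ => (1 : ℝ)) μ = (μ D).toReal - (μ D).toReal ^ 2 ∧
      variance (fun ω => -(D.indicator (fun _ => (1 : ℝ)) ω)) μ
        = (μ D).toReal - (μ D).toReal ^ 2 := by
  have hfmem : MemLp (D.indicator (fun _ => (1 : ℝ))) 2 μ :=
    memLp_indicator_const 2 hD 1 (Or.inr (measure_ne_top μ D))
  have hfint : Integrable (D.indicator (fun _ => (1 : ℝ))) μ := hfmem.integrable one_le_two
  have hintf : (∫ ω, D.indicator (fun _ => (1 : ℝ)) ω ∂μ) = (μ D).toReal := by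
    rw [MeasureTheory.integral_indicator hD]
    simp
    rfl
  have hfsq : (D.indicator (fun _ => (1 : ℝ)) ^ 2 : Ω → ℝ) = D.indicator (fun _ => (1 : ℝ)) := by
    funext ω
    by_cases h : ω ∈ D <;> simp [Set.indicator_apply, h]
  have hvarf : variance (D.indicator (fun _ => (1 : ℝ))) μ = (μ D).toReal - (μ D).toReal ^ 2 := by
    rw [variance_eq_sub hfmem, hfsq, hintf]
  refine ⟨hfint, hvarf, ?_⟩
  have hXmem : MemLp (fun ω => -(D.indicator (fun _ => (1 : ℝ)) ω)) 2 μ := hfmem.neg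
  have hXsq : ((fun ω => -(D.indicator (fun _ => (1 : ℝ)) ω)) ^ 2 : Ω → ℝ)
      = D.indicator (fun _ => (1 : ℝ)) := by
    funext ω
    by_cases h : ω ∈ D <;> simp [Set.indicator_apply, h]
  have hintX : (∫ ω, -(D.indicator (fun _ => (1 : ℝ)) ω) ∂μ) = -(μ D).toReal := by
    rw [integral_neg, hintf]
  rw [variance_eq_sub hXmem, hXsq, hintX, hintf]
  ring

/-- Let `D` be measurable with `0 < P(D) < 1`, `X = -𝟙_D`, and `𝓑₁` the sub-σ-algebra
generated by `{X ≥ 0}`. Then `Var(X) < Var(X₋) + Var(E(X₋|𝓑₁)) = 2 Var(X)`. -/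
theorem variance_indicator_condexp
    {Ω : Type*} {mΩ : MeasurableSpace Ω} {μ : Measure Ω} [IsProbabilityMeasure μ]
    {D : Set Ω} (hD : MeasurableSet D) (hD0 : 0 < μ D) (hD1 : μ D < 1)
    (X : Ω → ℝ) (hX : X = fun ω => -(D.indicator (fun _ => (1 : ℝ)) ω))
    (𝓑₁ : MeasurableSpace Ω)
    (h𝓑₁ : 𝓑₁ = MeasurableSpace.generateFrom {{ω | 0 ≤ X ω}}) :
    variance X μ <
        variance (fun ω => -min (X ω) 0) μ +
          variance (μ[fun ω => -min (X ω) 0 | 𝓑₁]) μ ∧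
      variance (fun ω => -min (X ω) 0) μ +
          variance (μ[fun ω => -min (X ω) 0 | 𝓑₁]) μ = 2 * variance X μ := by
  obtain ⟨hfint, hvarf, hvarneg⟩ := indicator_var_aux (μ := μ) hD
  set p : ℝ := (μ D).toReal with hp
  -- X₋ = 𝟙_D
  have hmin : (fun ω => -min (X ω) 0) = D.indicator (fun _ => (1 : ℝ)) := by
    funext ω
    rw [hX]
    by_cases h : ω ∈ D <;> simp [Set.indicator_apply, h]
  -- the set {0 ≤ X} is Dᶜ
  have hset : {ω | 0 ≤ X ω} = Dᶜ := by
    ext ω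
    rw [hX]
    by_cases h : ω ∈ D <;> simp [Set.indicator_apply, h]
  have h𝓑₁le : 𝓑₁ ≤ mΩ := by
    rw [h𝓑₁]
    refine MeasurableSpace.generateFrom_le ?_
    rintro s hs
    rw [Set.mem_singleton_iff] at hs
    rw [hs, hset]
    exact hD.compl
  have hDmeas𝓑₁ : MeasurableSet[𝓑₁] D := by
    have h1 : MeasurableSet[𝓑₁] Dᶜ := by
      rw [h𝓑₁, ← hset]
      exact MeasurableSpace.measurableSet_generateFrom rfl
    simpa using h1.compl
  have hfsm : StronglyMeasurable[𝓑₁] (D.indicator (fun _ => (1 : ℝ))) := by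
    apply StronglyMeasurable.indicator _ hDmeas𝓑₁
    exact stronglyMeasurable_const
  haveI : SigmaFinite (μ.trim h𝓑₁le) := (isFiniteMeasure_trim h𝓑₁le).toSigmaFinite
  have hcond : μ[D.indicator (fun _ => (1 : ℝ)) | 𝓑₁] = D.indicator (fun _ => (1 : ℝ)) :=
    condExp_of_stronglyMeasurable h𝓑₁le hfsm hfint
  have hvarX : variance X μ = p - p ^ 2 := by
    rw [hX]
    exact hvarneg
  have hp0 : 0 < p := ENNReal.toReal_pos hD0.ne' (measure_ne_top μ D)
  have hp1 : p < 1 := by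
    have h2 := (ENNReal.toReal_lt_toReal (measure_ne_top μ D) ENNReal.one_ne_top).2 hD1
    simpa using h2
  have hvarpos : 0 < p - p ^ 2 := by nlinarith
  rw [hmin, hcond, hvarX, hvarf]
  constructor
  · linarith
  · ring
end
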